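/- arXiv:1204.1760 — 6 statements merged into one kernel-verified Lean document; each statement's English description precedes it below -/
import Mathlib

section
/- Let k be a field, k[x] = k[x_1,...,x_n], let P = (P_1,...,P_l) be a regular sequence of homogeneous polynomials all of degree p, and let Q = (Q_1,...,Q_l) be homogeneous polynomials all of degree q with p > q >= 1. Set R := k[x]/(P-Q) where (P-Q) is the ideal generated by P_1-Q_1, ..., P_l-Q_l, and for d >= 0 let R^(d) be the image in R of the space of polynomials of degree at most d (with R^(-1) = 0). Then for every d >= 0, the composite map phi_d from the space k[x]_d of homogeneous polynomials of degree d, via the quotient map to R^(d) followed by the projection to R^(d)/R^(d-1), is surjective, and its kernel equals (P)_d, the degree-d homogeneous component of the ideal generated by P_1,...,P_l. -/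
/-!
Surjectivity is immediate, and `(P)_d ⊆ ker φ_d` because `∑ aᵢ Pᵢ ≡ ∑ aᵢ Qᵢ` and the right side
has degree `< d`. Conversely, let `f` be homogeneous of degree `d` with `f ≡ g` modulo `(P - Q)` and
`deg g < d`; write `f - g = ∑ cᵢ (Pᵢ - Qᵢ)` and induct on `N = max deg cᵢ`. When `N + p > d`, the
degree-`(N + p)` part of this identity, to which the `cᵢ Qᵢ` do not contribute as `q < p`, says that
the top forms `Eᵢ` of the `cᵢ` form a syzygy `∑ Eᵢ Pᵢ = 0`. Since `P` is regular, this syzygy is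
Koszul, `E = (w - wᵀ) P` with `w` homogeneous of degree `N - p`, and replacing `c` by
`c - (w - wᵀ)(P - Q)` leaves `∑ cᵢ (Pᵢ - Qᵢ)` unchanged and lowers `N`. Once `N + p ≤ d`, the
degree-`d` part of the identity exhibits `f` as an element of `(P)`.
-/

open MvPolynomial Matrix

/-- The filtration `R⁽ᵈ⁾` of the quotient ring `R = k[x]/I`: `filt k n I (d+1)` is the image of
the polynomials of (total) degree at most `d`, and `filt k n I 0 = 0` plays the role of
`R⁽⁻¹⁾ = 0`. -/
noncomputable def filt (k : Type) [Field k] (n : ℕ) (I : Ideal (MvPolynomial (Fin n) k)) :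
    ℕ → Submodule k (MvPolynomial (Fin n) k ⧸ I)
  | 0 => ⊥
  | (d + 1) =>
      Submodule.map (Ideal.Quotient.mkₐ k I).toLinearMap (restrictTotalDegree (Fin n) k d)

theorem dotProduct_mem_span_range {R ι : Type*} [CommSemiring R] [Fintype ι] (c v : ι → R) :
    c ⬝ᵥ v ∈ Ideal.span (Set.range v) :=
  Ideal.mem_span_range_iff_exists_fun.2 ⟨c, rfl⟩

namespace MvPolynomial

section Components

variable {σ R : Type*} [CommSemiring R]

attribute [local instance] MvPolynomial.gradedAlgebra in
theorem homogeneousComponent_mul_of_isHomogeneous {g : MvPolynomial σ R} {a : ℕ}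
    (hg : g.IsHomogeneous a) (c : MvPolynomial σ R) (e : ℕ) :
    homogeneousComponent e (c * g) = if a ≤ e then homogeneousComponent (e - a) c * g else 0 := by
  rw [← decomposition.decompose'_apply, ← decomposition.decompose'_apply]
  exact DirectSum.coe_decompose_mul_of_right_mem _ e ((mem_homogeneousSubmodule _ _).2 hg)

theorem homogeneousComponent_add_mul_of_isHomogeneous {g : MvPolynomial σ R} {a : ℕ}
    (hg : g.IsHomogeneous a) (c : MvPolynomial σ R) (e : ℕ) :
    homogeneousComponent (e + a) (c * g) = homogeneousComponent e c * g := by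
  simp [homogeneousComponent_mul_of_isHomogeneous hg]

theorem homogeneousComponent_mul_of_isHomogeneous_of_lt {g : MvPolynomial σ R} {a e : ℕ}
    (hg : g.IsHomogeneous a) (c : MvPolynomial σ R) (he : e < a) :
    homogeneousComponent e (c * g) = 0 := by
  rw [homogeneousComponent_mul_of_isHomogeneous hg, if_neg (not_le.2 he)]

theorem homogeneousComponent_eq_zero_of_isHomogeneous {φ : MvPolynomial σ R} {m e : ℕ}
    (hφ : φ.IsHomogeneous m) (he : e ≠ m) : homogeneousComponent e φ = 0 := by
  rw [homogeneousComponent_of_mem hφ, if_neg he]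

theorem sum_range_homogeneousComponent {φ : MvPolynomial σ R} {N : ℕ}
    (h : ∀ e, N ≤ e → homogeneousComponent e φ = 0) :
    ∑ i ∈ Finset.range N, homogeneousComponent i φ = φ := by
  ext s
  by_cases hs : s.degree < N
  · simp [coeff_sum, coeff_homogeneousComponent, hs]
  · have hcoeff := congrArg (coeff s) (h _ (not_lt.1 hs))
    rw [coeff_homogeneousComponent, if_pos rfl, coeff_zero] at hcoeff
    simp [coeff_sum, coeff_homogeneousComponent, hcoeff]

theorem eq_zero_of_forall_homogeneousComponent_eq_zero {φ : MvPolynomial σ R}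
    (h : ∀ e, homogeneousComponent e φ = 0) : φ = 0 := by
  rw [← sum_range_homogeneousComponent (N := 0) fun e _ => h e, Finset.sum_range_zero]

theorem totalDegree_le_iff_forall_homogeneousComponent_eq_zero {φ : MvPolynomial σ R} {m : ℕ} :
    φ.totalDegree ≤ m ↔ ∀ e, m + 1 ≤ e → homogeneousComponent e φ = 0 := by
  refine ⟨fun h e he => homogeneousComponent_eq_zero e φ (by omega), fun h => ?_⟩
  rw [← sum_range_homogeneousComponent h, ← mem_restrictTotalDegree]
  exact Submodule.sum_mem _ fun i hi => (mem_restrictTotalDegree _ _ _).2 <|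
    (homogeneousComponent_isHomogeneous i φ).totalDegree_le.trans (by simp at hi; omega)

variable {ι : Type*} [Fintype ι] {P : ι → MvPolynomial σ R} {p : ℕ}

theorem homogeneousComponent_add_dotProduct (hP : ∀ i, (P i).IsHomogeneous p)
    (c : ι → MvPolynomial σ R) (e : ℕ) :
    homogeneousComponent (e + p) (c ⬝ᵥ P) = (fun i => homogeneousComponent e (c i)) ⬝ᵥ P := by
  simp only [dotProduct, map_sum, homogeneousComponent_add_mul_of_isHomogeneous (hP _)]

theorem homogeneousComponent_dotProduct_of_lt (hP : ∀ i, (P i).IsHomogeneous p)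
    (c : ι → MvPolynomial σ R) {e : ℕ} (he : e < p) : homogeneousComponent e (c ⬝ᵥ P) = 0 := by
  simp only [dotProduct, map_sum, homogeneousComponent_mul_of_isHomogeneous_of_lt (hP _) _ he,
    Finset.sum_const_zero]

theorem homogeneousComponent_dotProduct_eq_zero (hP : ∀ i, (P i).IsHomogeneous p)
    {c : ι → MvPolynomial σ R} {M : ℕ} (hc : ∀ i e, M ≤ e → homogeneousComponent e (c i) = 0)
    {e : ℕ} (he : M + p ≤ e) : homogeneousComponent e (c ⬝ᵥ P) = 0 := by
  obtain ⟨e, rfl⟩ := Nat.exists_eq_add_of_le' (le_of_add_le_right he)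
  rw [homogeneousComponent_add_dotProduct hP]
  simp [hc _ e (by omega)]

theorem homogeneousComponent_add_mulVec (hP : ∀ i, (P i).IsHomogeneous p)
    (A : Matrix ι ι (MvPolynomial σ R)) (e : ℕ) (i : ι) :
    homogeneousComponent (e + p) ((A *ᵥ P) i) = (A.map (homogeneousComponent e) *ᵥ P) i :=
  homogeneousComponent_add_dotProduct hP _ e

end Components

end MvPolynomial

section Koszul

variable {R : Type*} [CommRing R]

/- The Koszul relations among `v` are the vectors `(w - wᵀ) *ᵥ v`; writing them with `w - wᵀ`
rather than an antisymmetric matrix keeps the diagonal zero in characteristic `2`. -/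
theorem Matrix.sub_transpose_mulVec_dotProduct_self {ι : Type*} [Fintype ι]
    (w : Matrix ι ι R) (v : ι → R) : ((w - wᵀ) *ᵥ v) ⬝ᵥ v = 0 := by
  rw [sub_mulVec, sub_dotProduct, dotProduct_comm (w *ᵥ v), dotProduct_mulVec,
    ← mulVec_transpose, sub_self]

theorem exists_eq_dotProduct_of_mem_span_image {ι : Type*} [Fintype ι] {v : ι → R} {s : Set ι}
    {x : R} (hx : x ∈ Ideal.span (v '' s)) : ∃ b : ι → R, (∀ j ∉ s, b j = 0) ∧ x = b ⬝ᵥ v := by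
  obtain ⟨b, hb, rfl⟩ := (Finsupp.mem_span_image_iff_linearCombination R).1 hx
  refine ⟨b, fun j hj => Finsupp.notMem_support_iff.1 fun h => hj (hb h), ?_⟩
  rw [Finsupp.linearCombination_apply, Finsupp.sum_fintype _ _ (by simp)]
  rfl

def IsWeaklyRegularFamily {l : ℕ} (P : Fin l → R) : Prop :=
  ∀ i : Fin l, ∀ f : R,
    f * P i ∈ Ideal.span (P '' {j | j < i}) → f ∈ Ideal.span (P '' {j | j < i})

variable {l : ℕ} {P : Fin l → R}

theorem mul_mem_span_image_lt_of_dotProduct_eq_zero {a : Fin l → R} {t : Fin l}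
    (ha : ∀ i, t < i → a i = 0) (h : a ⬝ᵥ P = 0) :
    a t * P t ∈ Ideal.span (P '' {j | j < t}) := by
  have hsum : a t * P t = -∑ i ∈ Finset.univ.erase t, a i * P i := by
    rw [eq_neg_iff_add_eq_zero, Finset.add_sum_erase _ (fun i => a i * P i) (Finset.mem_univ t)]
    exact h
  rw [hsum]
  refine neg_mem (Ideal.sum_mem _ fun i hi => ?_)
  rcases lt_trichotomy i t with hit | rfl | hti
  · exact Ideal.mul_mem_left _ _ (Ideal.subset_span ⟨i, hit, rfl⟩)
  · exact absurd hi (Finset.notMem_erase i _)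
  · simp [ha i hti]

theorem exists_koszul_sub_eq_zero_of_le (hP : IsWeaklyRegularFamily P) {a : Fin l → R}
    {t : Fin l} (ha : ∀ i, t < i → a i = 0) (h : a ⬝ᵥ P = 0) :
    ∃ B : Matrix (Fin l) (Fin l) R, ∀ i, t ≤ i → (a - (B - Bᵀ) *ᵥ P) i = 0 := by
  obtain ⟨b, hb, hab⟩ := exists_eq_dotProduct_of_mem_span_image
    (hP t _ (mul_mem_span_image_lt_of_dotProduct_eq_zero ha h))
  refine ⟨vecMulVec (Pi.single t 1) b, fun i hi => ?_⟩
  have hbi : b i = 0 := hb i (not_lt.2 hi)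
  rcases hi.eq_or_lt with rfl | hti
  · simp [sub_mulVec, vecMulVec_mulVec, hab, hbi]
  · simp [sub_mulVec, vecMulVec_mulVec, hbi, ha i hti, hti.ne']

theorem exists_koszul_eq_of_dotProduct_eq_zero_of_le (hP : IsWeaklyRegularFamily P) (t : ℕ)
    {a : Fin l → R} (ha : ∀ i : Fin l, t ≤ i → a i = 0) (h : a ⬝ᵥ P = 0) :
    ∃ w : Matrix (Fin l) (Fin l) R, a = (w - wᵀ) *ᵥ P := by
  induction t generalizing a with
  | zero => exact ⟨0, funext fun i => by simp [ha i (Nat.zero_le _)]⟩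
  | succ t ih =>
    by_cases htl : t < l
    · obtain ⟨B, hB⟩ := exists_koszul_sub_eq_zero_of_le hP (t := ⟨t, htl⟩)
        (fun i hi => ha i (Fin.lt_def.1 hi)) h
      obtain ⟨W, hW⟩ := ih (fun i hi => hB i (Fin.le_def.2 hi))
        (by rw [sub_dotProduct, h, sub_transpose_mulVec_dotProduct_self, sub_zero])
      refine ⟨W + B, ?_⟩
      rw [transpose_add, add_sub_add_comm, add_mulVec, ← hW, sub_add_cancel]
    · exact ih (fun i _ => ha i (by omega)) h

theorem exists_koszul_eq_of_dotProduct_eq_zero (hP : IsWeaklyRegularFamily P) {a : Fin l → R}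
    (h : a ⬝ᵥ P = 0) : ∃ w : Matrix (Fin l) (Fin l) R, a = (w - wᵀ) *ᵥ P :=
  exists_koszul_eq_of_dotProduct_eq_zero_of_le hP l (fun i hi => absurd i.isLt (by omega)) h

end Koszul

namespace MvPolynomial

section Descent

variable {σ R : Type*} [CommRing R] {l p q : ℕ} {P Q : Fin l → MvPolynomial σ R}

theorem exists_homogeneous_koszul_eq (hreg : IsWeaklyRegularFamily P)
    (hP : ∀ i, (P i).IsHomogeneous p) {E : Fin l → MvPolynomial σ R} {m : ℕ}
    (hE : ∀ i, (E i).IsHomogeneous (m + p)) (h : E ⬝ᵥ P = 0) :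
    ∃ w : Matrix (Fin l) (Fin l) (MvPolynomial σ R),
      (∀ i j, (w i j).IsHomogeneous m) ∧ E = (w - wᵀ) *ᵥ P := by
  obtain ⟨w, hw⟩ := exists_koszul_eq_of_dotProduct_eq_zero hreg h
  refine ⟨w.map (homogeneousComponent m), fun i j => homogeneousComponent_isHomogeneous m _, ?_⟩
  ext1 i
  rw [← homogeneousComponent_eq_self (hE i), hw, homogeneousComponent_add_mulVec hP,
    Matrix.map_sub _ (map_sub _), transpose_map]

theorem eq_zero_of_dotProduct_eq_zero_of_lt (hreg : IsWeaklyRegularFamily P)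
    (hP : ∀ i, (P i).IsHomogeneous p) {E : Fin l → MvPolynomial σ R} {N : ℕ}
    (hE : ∀ i, (E i).IsHomogeneous N) (hN : N < p) (h : E ⬝ᵥ P = 0) : E = 0 := by
  obtain ⟨w, hw⟩ := exists_koszul_eq_of_dotProduct_eq_zero hreg h
  ext1 i
  rw [← homogeneousComponent_eq_self (hE i), hw]
  exact homogeneousComponent_dotProduct_of_lt hP _ hN

theorem topComponents_dotProduct_eq_zero (hpq : q < p)
    (hP : ∀ i, (P i).IsHomogeneous p) (hQ : ∀ i, (Q i).IsHomogeneous q)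
    {f g : MvPolynomial σ R} {c : Fin l → MvPolynomial σ R} {d N : ℕ} (hf : f.IsHomogeneous d)
    (hg : ∀ e, d ≤ e → homogeneousComponent e g = 0)
    (hc : ∀ i e, N + 1 ≤ e → homogeneousComponent e (c i) = 0) (hd : d < N + p)
    (heq : f = g + c ⬝ᵥ (P - Q)) : (fun i => homogeneousComponent N (c i)) ⬝ᵥ P = 0 := by
  have htop := congrArg (homogeneousComponent (N + p)) heq
  rwa [homogeneousComponent_eq_zero_of_isHomogeneous hf hd.ne', map_add, hg _ hd.le,
    dotProduct_sub, map_sub, homogeneousComponent_add_dotProduct hP,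
    homogeneousComponent_dotProduct_eq_zero hQ hc (by omega), zero_add, sub_zero, eq_comm] at htop

theorem exists_lower_degree_coefficients (hpq : q < p) (hreg : IsWeaklyRegularFamily P)
    (hP : ∀ i, (P i).IsHomogeneous p) (hQ : ∀ i, (Q i).IsHomogeneous q)
    {c : Fin l → MvPolynomial σ R} {N : ℕ}
    (hc : ∀ i e, N + 1 ≤ e → homogeneousComponent e (c i) = 0)
    (htop : (fun i => homogeneousComponent N (c i)) ⬝ᵥ P = 0) :
    ∃ c' : Fin l → MvPolynomial σ R, (∀ i e, N ≤ e → homogeneousComponent e (c' i) = 0) ∧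
      c' ⬝ᵥ (P - Q) = c ⬝ᵥ (P - Q) := by
  set E := fun i => homogeneousComponent N (c i)
  have hEhom : ∀ i, (E i).IsHomogeneous N := fun i => homogeneousComponent_isHomogeneous N _
  have hcE : ∀ i e, N ≤ e → homogeneousComponent e (c i - E i) = 0 := by
    intro i e he
    rcases he.eq_or_lt with rfl | hlt
    · rw [map_sub, homogeneousComponent_eq_self (hEhom i), sub_self]
    · rw [map_sub, hc i e hlt, homogeneousComponent_eq_zero_of_isHomogeneous (hEhom i) hlt.ne',
        sub_self]
  by_cases hpN : p ≤ N
  · obtain ⟨m, rfl⟩ := Nat.exists_eq_add_of_le' hpN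
    obtain ⟨w, hw, hE⟩ := exists_homogeneous_koszul_eq hreg hP hEhom htop
    refine ⟨c - (w - wᵀ) *ᵥ (P - Q), fun i e he => ?_, ?_⟩
    · have hsplit : c - (w - wᵀ) *ᵥ (P - Q) = (c - E) + (w - wᵀ) *ᵥ Q := by
        rw [mulVec_sub, ← hE]
        abel
      rw [hsplit, Pi.add_apply, Pi.sub_apply, map_add, hcE i e he, zero_add]
      refine homogeneousComponent_dotProduct_eq_zero hQ (M := m + 1) (fun j e' he' => ?_)
        (by omega)
      exact homogeneousComponent_eq_zero_of_isHomogeneous ((hw i j).sub (hw j i)) (by omega)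
    · rw [sub_dotProduct, Matrix.sub_transpose_mulVec_dotProduct_self, sub_zero]
  · have hE0 : E = 0 :=
      eq_zero_of_dotProduct_eq_zero_of_lt hreg hP hEhom (not_le.1 hpN) htop
    refine ⟨c, fun i e he => ?_, rfl⟩
    simpa [hE0] using hcE i e he

theorem mem_span_of_eq_add_dotProduct (hpq : q < p) (hreg : IsWeaklyRegularFamily P)
    (hP : ∀ i, (P i).IsHomogeneous p) (hQ : ∀ i, (Q i).IsHomogeneous q)
    {f g : MvPolynomial σ R} {d : ℕ} (hf : f.IsHomogeneous d)
    (hg : ∀ e, d ≤ e → homogeneousComponent e g = 0) (N : ℕ) {c : Fin l → MvPolynomial σ R}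
    (hc : ∀ i e, N ≤ e → homogeneousComponent e (c i) = 0) (heq : f = g + c ⬝ᵥ (P - Q)) :
    f ∈ Ideal.span (Set.range P) := by
  induction N generalizing c with
  | zero =>
    have hc0 : c = 0 := _root_.funext fun i =>
      eq_zero_of_forall_homogeneousComponent_eq_zero fun e => hc i e e.zero_le
    rw [hc0, zero_dotProduct, add_zero] at heq
    rw [← homogeneousComponent_eq_self hf, heq, hg d le_rfl]
    exact zero_mem _
  | succ N ih =>
    by_cases hd : d < N + p
    · obtain ⟨c', hc', hcc'⟩ := exists_lower_degree_coefficients hpq hreg hP hQ hc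
        (topComponents_dotProduct_eq_zero hpq hP hQ hf hg hc hd heq)
      exact ih hc' (hcc' ▸ heq)
    · obtain ⟨m, rfl⟩ := Nat.exists_eq_add_of_le' (show p ≤ d by omega)
      rw [← homogeneousComponent_eq_self hf, heq, map_add, hg _ le_rfl, zero_add, dotProduct_sub,
        map_sub, homogeneousComponent_dotProduct_eq_zero hQ hc (by omega), sub_zero,
        homogeneousComponent_add_dotProduct hP]
      exact dotProduct_mem_span_range _ _

theorem mem_span_of_sub_mem_span_sub (hpq : q < p) (hreg : IsWeaklyRegularFamily P)
    (hP : ∀ i, (P i).IsHomogeneous p) (hQ : ∀ i, (Q i).IsHomogeneous q)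
    {f g : MvPolynomial σ R} {d : ℕ} (hf : f.IsHomogeneous d)
    (hg : ∀ e, d ≤ e → homogeneousComponent e g = 0)
    (hfg : f - g ∈ Ideal.span (Set.range (P - Q))) : f ∈ Ideal.span (Set.range P) := by
  obtain ⟨c, hc⟩ : ∃ c, c ⬝ᵥ (P - Q) = f - g := Ideal.mem_span_range_iff_exists_fun.1 hfg
  refine mem_span_of_eq_add_dotProduct hpq hreg hP hQ hf hg
    ((Finset.univ.sup fun i => (c i).totalDegree) + 1) (fun i e he => ?_)
    (eq_add_of_sub_eq' hc.symm)
  exact homogeneousComponent_eq_zero _ _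
    (Nat.lt_of_lt_of_le (Nat.lt_succ_of_le (Finset.le_sup (f := fun i => (c i).totalDegree)
      (Finset.mem_univ i))) he)

end Descent

end MvPolynomial

section Filtration

variable {k : Type} [Field k] {n : ℕ}

theorem mem_filt_iff {I : Ideal (MvPolynomial (Fin n) k)} {d : ℕ} {r : MvPolynomial (Fin n) k ⧸ I} :
    r ∈ filt k n I d ↔ ∃ g : MvPolynomial (Fin n) k,
      (∀ e, d ≤ e → homogeneousComponent e g = 0) ∧ Ideal.Quotient.mk I g = r := by
  cases d with
  | zero =>
    rw [filt, Submodule.mem_bot]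
    constructor
    · rintro rfl
      exact ⟨0, fun e _ => map_zero _, map_zero _⟩
    · rintro ⟨g, hg, rfl⟩
      rw [eq_zero_of_forall_homogeneousComponent_eq_zero fun e => hg e e.zero_le, map_zero]
  | succ m =>
    simp only [filt, Submodule.mem_map, mem_restrictTotalDegree,
      totalDegree_le_iff_forall_homogeneousComponent_eq_zero]
    rfl

theorem exists_homogeneous_sub_mem_filt {I : Ideal (MvPolynomial (Fin n) k)} {d : ℕ}
    {r : MvPolynomial (Fin n) k ⧸ I} (hr : r ∈ filt k n I (d + 1)) :
    ∃ f ∈ homogeneousSubmodule (Fin n) k d, r - Ideal.Quotient.mk I f ∈ filt k n I d := by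
  obtain ⟨g, hg, rfl⟩ := mem_filt_iff.1 hr
  refine ⟨homogeneousComponent d g, homogeneousComponent_mem d g,
    mem_filt_iff.2 ⟨g - homogeneousComponent d g, fun e he => ?_, map_sub _ _ _⟩⟩
  have hgd := homogeneousComponent_isHomogeneous d g
  rcases he.eq_or_lt with rfl | hlt
  · rw [map_sub, homogeneousComponent_eq_self hgd, sub_self]
  · rw [map_sub, hg e hlt, homogeneousComponent_eq_zero_of_isHomogeneous hgd hlt.ne', sub_self]

theorem mk_mem_filt_of_mem_span {l p q : ℕ} {P Q : Fin l → MvPolynomial (Fin n) k} (hpq : q < p)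
    (hP : ∀ i, (P i).IsHomogeneous p) (hQ : ∀ i, (Q i).IsHomogeneous q)
    {f : MvPolynomial (Fin n) k} {d : ℕ} (hf : f.IsHomogeneous d)
    (hfP : f ∈ Ideal.span (Set.range P)) :
    Ideal.Quotient.mk (Ideal.span (Set.range (P - Q))) f ∈
      filt k n (Ideal.span (Set.range (P - Q))) d := by
  obtain ⟨c, rfl⟩ : ∃ c, c ⬝ᵥ P = f := Ideal.mem_span_range_iff_exists_fun.1 hfP
  by_cases hpd : p ≤ d
  · obtain ⟨m, rfl⟩ := Nat.exists_eq_add_of_le' hpd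
    set a := fun i => homogeneousComponent m (c i)
    have ha : ∀ i e, m + 1 ≤ e → homogeneousComponent e (a i) = 0 := fun i e he =>
      homogeneousComponent_eq_zero_of_isHomogeneous (homogeneousComponent_isHomogeneous m _)
        (by omega)
    rw [← homogeneousComponent_eq_self hf, homogeneousComponent_add_dotProduct hP]
    refine mem_filt_iff.2 ⟨a ⬝ᵥ Q,
      fun e he => homogeneousComponent_dotProduct_eq_zero hQ ha (by omega), ?_⟩
    refine (Ideal.Quotient.eq.2 ?_).symm
    rw [← dotProduct_sub]
    exact dotProduct_mem_span_range _ _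
  · rw [← homogeneousComponent_eq_self hf, homogeneousComponent_dotProduct_of_lt hP _
      (not_le.1 hpd), map_zero]
    exact zero_mem _

end Filtration

theorem stmt0_general (k : Type) [Field k] (n l p q : ℕ) (hpq : q < p)
    (P Q : Fin l → MvPolynomial (Fin n) k)
    (hP : ∀ i, (P i).IsHomogeneous p) (hQ : ∀ i, (Q i).IsHomogeneous q)
    (hreg : ∀ i : Fin l, ∀ f : MvPolynomial (Fin n) k,
      f * P i ∈ Ideal.span (P '' {j | j < i}) → f ∈ Ideal.span (P '' {j | j < i}))
    (d : ℕ) :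
    (∀ r ∈ filt k n (Ideal.span (Set.range fun i => P i - Q i)) (d + 1),
        ∃ f ∈ homogeneousSubmodule (Fin n) k d,
          r - Ideal.Quotient.mk (Ideal.span (Set.range fun i => P i - Q i)) f ∈
            filt k n (Ideal.span (Set.range fun i => P i - Q i)) d) ∧
    (∀ f ∈ homogeneousSubmodule (Fin n) k d,
        (Ideal.Quotient.mk (Ideal.span (Set.range fun i => P i - Q i)) f ∈
            filt k n (Ideal.span (Set.range fun i => P i - Q i)) d ↔
          f ∈ Ideal.span (Set.range P))) := by
  refine ⟨fun r hr => exists_homogeneous_sub_mem_filt hr, fun f hf => ⟨fun hmem => ?_,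
    mk_mem_filt_of_mem_span hpq hP hQ hf⟩⟩
  obtain ⟨g, hg, hgf⟩ := mem_filt_iff.1 hmem
  exact mem_span_of_sub_mem_span_sub hpq hreg hP hQ hf hg (Ideal.Quotient.eq.1 hgf.symm)

/-- Lemma (surjectivity and kernel of `φ_d`): for a regular sequence `P` of homogeneous
polynomials of degree `p` and homogeneous polynomials `Q` of degree `q`, `p > q ≥ 1`,
with `R = k[x]/(P - Q)`, the composite `φ_d : k[x]_d → R⁽ᵈ⁾/R⁽ᵈ⁻¹⁾` is surjective
(every element of `R⁽ᵈ⁾` is congruent modulo `R⁽ᵈ⁻¹⁾` to the image of a homogeneous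
polynomial of degree `d`), and its kernel is `(P)_d` (for `f` homogeneous of degree `d`,
the image of `f` lies in `R⁽ᵈ⁻¹⁾` iff `f ∈ (P)`). -/
theorem stmt0 (k : Type) [Field k] (n l p q : ℕ) (hq : 1 ≤ q) (hpq : q < p)
    (P Q : Fin l → MvPolynomial (Fin n) k)
    (hP : ∀ i, (P i).IsHomogeneous p) (hQ : ∀ i, (Q i).IsHomogeneous q)
    (hreg : ∀ i : Fin l, ∀ f : MvPolynomial (Fin n) k,
      f * P i ∈ Ideal.span (P '' {j | j < i}) → f ∈ Ideal.span (P '' {j | j < i}))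
    (d : ℕ) :
    (∀ r ∈ filt k n (Ideal.span (Set.range fun i => P i - Q i)) (d + 1),
        ∃ f ∈ homogeneousSubmodule (Fin n) k d,
          r - Ideal.Quotient.mk (Ideal.span (Set.range fun i => P i - Q i)) f ∈
            filt k n (Ideal.span (Set.range fun i => P i - Q i)) d) ∧
    (∀ f ∈ homogeneousSubmodule (Fin n) k d,
        (Ideal.Quotient.mk (Ideal.span (Set.range fun i => P i - Q i)) f ∈
            filt k n (Ideal.span (Set.range fun i => P i - Q i)) d ↔
          f ∈ Ideal.span (Set.range P))) :=
  stmt0_general k n l p q hpq P Q hP hQ hreg d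
end

section
/- Fix an integer n >= 1 and an integer l with n not dividing l, and set d := n/gcd(l,n) (so d >= 2). For any permutation u in the symmetric group S_n, the number of (u,c^l)-equivariant functions f : [n] -> [n] union {0} equals (n+1)^{r_d(u)}, where r_d(u) is the number of cycles of u whose length is divisible by d. -/
/-!
A map `f` with `f ∘ u = g ∘ f` is, on a cycle of `u` of length `m`, determined by its value at
one point of the cycle, and that value can be any point of period `m` for `g`; at a fixed point
of `u` it must be a fixed point of `g`. For `g = c^l` extended to `[n] ∪ {0}`, the only fixed
point is `0`, and the points of period `m` are `0` together with all of `[n]` when `d ∣ m`, and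
`0` alone otherwise.
-/

open Function Equiv Equiv.Perm Finset

section

variable {α β : Type*} {g : β → β} {b₀ : β}

theorem Function.Semiconj.eq_of_apply_eq_self (hg : ∀ b, IsFixedPt g b ↔ b = b₀)
    {u : Perm α} {f : α → β} (hf : Semiconj f u g) {j : α} (hj : u j = j) : f j = b₀ :=
  (hg _).1 (by rw [IsFixedPt, ← hf j, hj])

theorem card_semiconj_one (hg : ∀ b, IsFixedPt g b ↔ b = b₀) :
    Nat.card {f : α → β // Semiconj f (1 : Perm α) g} = 1 := by
  have hb₀ : g b₀ = b₀ := (hg b₀).2 rfl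
  refine Nat.card_eq_one_iff_unique.2 ⟨⟨fun f f' => Subtype.ext (funext fun j => ?_)⟩,
    ⟨⟨fun _ => b₀, fun _ => hb₀.symm⟩⟩⟩
  rw [f.2.eq_of_apply_eq_self hg rfl, f'.2.eq_of_apply_eq_self hg rfl]

variable [DecidableEq α]

def Equiv.Perm.restrictSupport (u : Perm α) (b₀ : β) (f : α → β) : α → β :=
  fun j => if u j = j then b₀ else f j

theorem semiconj_restrictSupport_of_disjoint (hb₀ : g b₀ = b₀) {σ τ : Perm α}
    (hd : σ.Disjoint τ) {f : α → β} (hf : Semiconj f ⇑(σ * τ) g) :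
    Semiconj (σ.restrictSupport b₀ f) σ g := by
  intro j
  by_cases hj : σ j = j
  · simp [restrictSupport, hj, hb₀]
  · have hτ : τ j = j := (hd j).resolve_left hj
    simp only [restrictSupport, EmbeddingLike.apply_eq_iff_eq, hj, if_false]
    rw [← hf j, Perm.mul_apply, hτ]

theorem semiconj_piecewise_of_disjoint {σ τ : Perm α} (hd : σ.Disjoint τ) {f₁ f₂ : α → β}
    (h₁ : Semiconj f₁ σ g) (h₂ : Semiconj f₂ τ g) :
    Semiconj (fun j => if σ j = j then f₂ j else f₁ j) ⇑(σ * τ) g := by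
  intro j
  by_cases hj : σ j = j
  · have hτj : σ (τ j) = τ j := by
      by_cases hτ : τ j = j
      · rw [hτ, hj]
      · exact (hd (τ j)).resolve_right (by simpa using hτ)
    simp only [Perm.mul_apply, hτj, hj, if_true]
    exact h₂ j
  · have hτ : τ j = j := (hd j).resolve_left hj
    simp only [Perm.mul_apply, hτ, EmbeddingLike.apply_eq_iff_eq, hj, if_false]
    exact h₁ j

def semiconjMulEquivOfDisjoint (hg : ∀ b, IsFixedPt g b ↔ b = b₀) {σ τ : Perm α}
    (hd : σ.Disjoint τ) :
    {f : α → β // Semiconj f ⇑(σ * τ) g} ≃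
      {f : α → β // Semiconj f σ g} × {f : α → β // Semiconj f τ g} where
  toFun f :=
    (⟨σ.restrictSupport b₀ f, semiconj_restrictSupport_of_disjoint ((hg b₀).2 rfl) hd f.2⟩,
      ⟨τ.restrictSupport b₀ f, semiconj_restrictSupport_of_disjoint ((hg b₀).2 rfl) hd.symm
        (hd.commute.eq ▸ f.2)⟩)
  invFun p := ⟨_, semiconj_piecewise_of_disjoint hd p.1.2 p.2.2⟩
  left_inv f := by
    refine Subtype.ext (funext fun j => ?_)
    by_cases hσ : σ j = j <;> by_cases hτ : τ j = j <;>
      simp only [restrictSupport, hσ, hτ, if_true, if_false]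
    exact (f.2.eq_of_apply_eq_self hg (by rw [Perm.mul_apply, hτ, hσ])).symm
  right_inv p := by
    refine Prod.ext (Subtype.ext (funext fun j => ?_)) (Subtype.ext (funext fun j => ?_))
    · by_cases hσ : σ j = j <;> simp only [restrictSupport, hσ, if_true, if_false]
      exact (p.1.2.eq_of_apply_eq_self hg hσ).symm
    · by_cases hτ : τ j = j
      · simp only [restrictSupport, hτ, if_true]
        exact (p.2.2.eq_of_apply_eq_self hg hτ).symm
      · simp only [restrictSupport, hτ, (hd j).resolve_right hτ, if_true, if_false]

theorem card_semiconj_mul_of_disjoint (hg : ∀ b, IsFixedPt g b ↔ b = b₀) {σ τ : Perm α}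
    (hd : σ.Disjoint τ) :
    Nat.card {f : α → β // Semiconj f ⇑(σ * τ) g} =
      Nat.card {f : α → β // Semiconj f σ g} * Nat.card {f : α → β // Semiconj f τ g} := by
  rw [Nat.card_congr (semiconjMulEquivOfDisjoint hg hd), Nat.card_prod]

variable [Fintype α] {σ : Perm α} {a : α}

theorem Equiv.Perm.IsCycle.isPeriodicPt_card_support (hσ : σ.IsCycle) (a : α) :
    IsPeriodicPt σ #σ.support a := by
  rw [IsPeriodicPt, IsFixedPt, ← coe_pow, ← hσ.orderOf, pow_orderOf_eq_one, one_apply]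

theorem Equiv.Perm.IsCycle.iterate_eq_of_pow_apply_eq (hσ : σ.IsCycle) (ha : σ a ≠ a) {b : β}
    (hb : IsPeriodicPt g #σ.support b) {i i' : ℕ} (h : (σ ^ i) a = (σ ^ i') a) :
    g^[i] b = g^[i'] b := by
  have hmod : i % #σ.support = i' % #σ.support :=
    hσ.orderOf ▸ pow_eq_pow_iff_modEq.1 (hσ.pow_eq_pow_iff.2 ⟨a, ha, h⟩)
  rw [← hb.iterate_mod_apply i, hmod, hb.iterate_mod_apply]

theorem Equiv.Perm.IsCycle.semiconj_ext (hg : ∀ b, IsFixedPt g b ↔ b = b₀) (hσ : σ.IsCycle)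
    (ha : σ a ≠ a) {f f' : α → β} (hf : Semiconj f σ g) (hf' : Semiconj f' σ g)
    (h : f a = f' a) : f = f' := by
  funext j
  by_cases hj : σ j = j
  · rw [hf.eq_of_apply_eq_self hg hj, hf'.eq_of_apply_eq_self hg hj]
  · obtain ⟨i, rfl⟩ := hσ.exists_pow_eq ha hj
    rw [coe_pow, hf.iterate_right i a, hf'.iterate_right i a, h]

theorem Equiv.Perm.IsCycle.exists_semiconj (hb₀ : g b₀ = b₀) (hσ : σ.IsCycle) (ha : σ a ≠ a)
    {b : β} (hb : IsPeriodicPt g #σ.support b) : ∃ f : α → β, Semiconj f σ g ∧ f a = b := by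
  classical
  refine ⟨fun j => if h : ∃ i : ℕ, (σ ^ i) a = j then g^[h.choose] b else b₀, fun j => ?_, ?_⟩
  · by_cases h : ∃ i : ℕ, (σ ^ i) a = j
    · have hsucc : (σ ^ (h.choose + 1)) a = σ j := by
        rw [pow_succ', Perm.mul_apply, h.choose_spec]
      have h' : ∃ i : ℕ, (σ ^ i) a = σ j := ⟨_, hsucc⟩
      simp only [dif_pos h', dif_pos h, ← iterate_succ_apply' g]
      exact hσ.iterate_eq_of_pow_apply_eq ha hb (h'.choose_spec.trans hsucc.symm)
    · have hj : σ j = j := by_contra fun hj => h (hσ.exists_pow_eq ha hj)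
      simp only [hj, dif_neg h, hb₀]
  · have h : ∃ i : ℕ, (σ ^ i) a = a := ⟨0, rfl⟩
    simp only [dif_pos h]
    exact hσ.iterate_eq_of_pow_apply_eq ha hb (i' := 0) h.choose_spec

theorem Equiv.Perm.IsCycle.card_semiconj (hg : ∀ b, IsFixedPt g b ↔ b = b₀) (hσ : σ.IsCycle) :
    Nat.card {f : α → β // Semiconj f σ g} = Nat.card (ptsOfPeriod g #σ.support) := by
  obtain ⟨a, ha, -⟩ := id hσ
  refine Nat.card_congr (Equiv.ofBijective
    (fun f => ⟨f.1 a, (hσ.isPeriodicPt_card_support a).map f.2⟩) ⟨fun f f' h => ?_, fun b => ?_⟩)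
  · exact Subtype.ext (hσ.semiconj_ext hg ha f.2 f'.2 (congrArg Subtype.val h))
  · obtain ⟨f, hf, hfa⟩ := hσ.exists_semiconj ((hg b₀).2 rfl) ha b.2
    exact ⟨⟨f, hf⟩, Subtype.ext hfa⟩

theorem card_semiconj_eq_prod_cycleType (hg : ∀ b, IsFixedPt g b ↔ b = b₀) (u : Perm α) :
    Nat.card {f : α → β // Semiconj f u g} =
      (u.cycleType.map fun m => Nat.card (ptsOfPeriod g m)).prod := by
  induction u using cycle_induction_on with
  | base_one => rw [card_semiconj_one hg, cycleType_one, Multiset.map_zero, Multiset.prod_zero]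
  | base_cycles σ hσ => simp [hσ.card_semiconj hg, hσ.cycleType]
  | induction_disjoint σ τ hd _ hσ hτ =>
    rw [card_semiconj_mul_of_disjoint hg hd, hσ, hτ, hd.cycleType_mul, Multiset.map_add,
      Multiset.prod_add]

end

section

variable {G : Type*} [AddLeftCancelMonoid G]

theorem Option.map_add_right_iterate (c : G) (m : ℕ) :
    (Option.map (· + c))^[m] = Option.map (· + m • c) := by
  induction m with
  | zero => funext o; cases o <;> simp
  | succ m ih => funext o; cases o <;> simp [iterate_succ, ih, succ_nsmul', add_assoc]

theorem Option.isFixedPt_map_add_right_iff {c : G} (hc : c ≠ 0) (o : Option G) :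
    IsFixedPt (Option.map (· + c)) o ↔ o = none := by
  cases o <;> simp [IsFixedPt, hc]

theorem Option.card_ptsOfPeriod_map_add_right [Finite G] [DecidableEq G] (c : G) (m : ℕ) :
    Nat.card (ptsOfPeriod (Option.map (· + c)) m) = if m • c = 0 then Nat.card G + 1 else 1 := by
  have hpts : ptsOfPeriod (Option.map (· + c)) m = {o | m • c = 0 ∨ o = none} := by
    ext o
    cases o <;> simp [IsPeriodicPt, IsFixedPt, Option.map_add_right_iterate]
  split_ifs with h <;> simp [hpts, h]

end

theorem ZMod.addOrderOf_intCast (n : ℕ) [NeZero n] (l : ℤ) :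
    addOrderOf (l : ZMod n) = n / l.gcd n := by
  obtain ⟨k, rfl | rfl⟩ := Int.eq_nat_or_neg l <;> simp [Int.gcd, Nat.gcd_comm, NeZero.ne]

theorem Multiset.prod_map_ite_one_eq_pow_card_filter {M ι : Type*} [CommMonoid M]
    (s : Multiset ι) (p : ι → Prop) [DecidablePred p] (a : M) :
    (s.map fun i => if p i then a else 1).prod = a ^ Multiset.card (s.filter p) := by
  induction s using Multiset.induction_on with
  | empty => simp
  | cons x s ih => by_cases h : p x <;> simp [h, ih, pow_succ, mul_comm]

/-- `[n] ∪ {0}` is modelled by `Option (ZMod n)`, with `none` playing the role of `0`. Fixed points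
of `u` are omitted from `Equiv.Perm.cycleType`; they never count towards `r_d(u)` since `d ≥ 2`. -/
theorem stmt2 (n : ℕ) [NeZero n] (l : ℤ) (hl : ¬ (n : ℤ) ∣ l) (u : Equiv.Perm (ZMod n)) :
    Nat.card {f : ZMod n → Option (ZMod n) //
        ∀ j : ZMod n, f (u j) = Option.map (fun x => x + (l : ZMod n)) (f j)} =
      (n + 1) ^ Multiset.card (u.cycleType.filter fun m => (n / l.gcd n) ∣ m) := by
  have hl' : (l : ZMod n) ≠ 0 := by rwa [ne_eq, ZMod.intCast_zmod_eq_zero_iff_dvd]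
  refine (card_semiconj_eq_prod_cycleType (Option.isFixedPt_map_add_right_iff hl') u).trans ?_
  rw [← Multiset.prod_map_ite_one_eq_pow_card_filter]
  congr 1
  refine Multiset.map_congr rfl fun m _ => ?_
  rw [Option.card_ptsOfPeriod_map_add_right, Nat.card_zmod]
  simp only [← addOrderOf_dvd_iff_nsmul_eq_zero, ZMod.addOrderOf_intCast]
end

section
/- Fix an integer n >= 1 and an integer l with n not dividing l, and set d := n/gcd(l,n) (so d >= 2). For any permutation u in the symmetric group S_n, the number of (u,c^l)-equivariant functions f : [n] -> [n] union {0} equals the sum, over all (u,d)-admissible set partitions pi of [n], of the product n(n-d)(n-2d)...(n-(k_pi - 1)d), where k_pi is the number of u-orbits of blocks of pi of length d (the product being the empty product 1 when k_pi = 0). -/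
open Classical

/-- `P` is (the set of blocks of) a set partition of `ZMod n`: all blocks are nonempty and
every element lies in exactly one block. -/
def IsBlocksPartition (n : ℕ) (P : Finset (Finset (ZMod n))) : Prop :=
  (∀ A ∈ P, A.Nonempty) ∧ ∀ a : ZMod n, ∃! A, A ∈ P ∧ a ∈ A

/-- `P` is a `(u,d)`-admissible set partition of `[n] = ZMod n`: `u` permutes the blocks,
at most one block is `u`-stable, and every non-stable block lies in a `u`-orbit of blocks
of length exactly `d`. -/
def IsAdmissible (n d : ℕ) (u : Equiv.Perm (ZMod n)) (P : Finset (Finset (ZMod n))) : Prop :=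
  IsBlocksPartition n P ∧
  (∀ A ∈ P, A.image ⇑u ∈ P) ∧
  (∀ A ∈ P, ∀ B ∈ P, A.image ⇑u = A → B.image ⇑u = B → A = B) ∧
  (∀ A ∈ P, A.image ⇑u ≠ A →
    (fun S : Finset (ZMod n) => S.image ⇑u)^[d] A = A ∧
      ∀ m : ℕ, 0 < m → m < d → (fun S : Finset (ZMod n) => S.image ⇑u)^[m] A ≠ A)

/-- The number `k_π` of `u`-orbits of blocks of `P` having length `d` (for an admissible
partition, the non-`u`-stable blocks fall into orbits of size exactly `d`). -/
def numDOrbits (n d : ℕ) (u : Equiv.Perm (ZMod n)) (P : Finset (Finset (ZMod n))) : ℕ :=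
  (P.filter fun A => A.image ⇑u ≠ A).card / d

/-- The product `n(n-d)(n-2d)⋯(n-(k-1)d)` (the empty product `1` when `k = 0`). -/
def fallingProd (n d k : ℕ) : ℕ :=
  ∏ i ∈ Finset.range k, (n - i * d)

noncomputable section Stmt3Aux
namespace Stmt3Aux
variable {n : ℕ} [NeZero n]

def blk (f : ZMod n → Option (ZMod n)) (j : ZMod n) : Finset (ZMod n) :=
  Finset.univ.filter (fun i => f i = f j)

def blocks (f : ZMod n → Option (ZMod n)) : Finset (Finset (ZMod n)) :=
  Finset.univ.image (blk f)

def Cnd (u : Equiv.Perm (ZMod n)) (L : ZMod n) (S : Finset (Finset (ZMod n)))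
    (φ : Finset (ZMod n) → ZMod n) : Prop :=
  Set.InjOn φ ↑S ∧ (∀ A ∈ S, φ (A.image ⇑u) = φ A + L) ∧ ∀ A ∉ S, φ A = 0

theorem sig_inj (u : Equiv.Perm (ZMod n)) : Function.Injective (fun A : Finset (ZMod n) => A.image ⇑u) :=
  fun _ _ h => Finset.image_injective u.injective h

variable {f : ZMod n → Option (ZMod n)} {u : Equiv.Perm (ZMod n)} {L : ZMod n} {d : ℕ}

theorem mem_blk {i j : ZMod n} : i ∈ blk f j ↔ f i = f j := by simp [blk]

theorem self_mem_blk (j : ZMod n) : j ∈ blk f j := mem_blk.2 rfl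

theorem blk_mem_blocks (j : ZMod n) : blk f j ∈ blocks f :=
  Finset.mem_image_of_mem _ (Finset.mem_univ j)

theorem mem_blocks {A : Finset (ZMod n)} : A ∈ blocks f ↔ ∃ j, blk f j = A := by
  simp [blocks]

theorem blk_eq_of_eq {i j : ZMod n} (h : f i = f j) : blk f i = blk f j := by
  ext a; simp [mem_blk, h]

theorem blk_eq_iff {i j : ZMod n} : blk f i = blk f j ↔ f i = f j :=
  ⟨fun h => mem_blk.1 (h ▸ self_mem_blk i), blk_eq_of_eq⟩

theorem map_add_inj : Function.Injective (Option.map (fun x : ZMod n => x + L)) :=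
  Option.map_injective (add_left_injective L)

section Equi

variable (hE : ∀ j : ZMod n, f (u j) = Option.map (fun x => x + L) (f j))
include hE

theorem img_blk (j : ZMod n) : (blk f j).image ⇑u = blk f (u j) := by
  ext i'
  simp only [Finset.mem_image, mem_blk]
  constructor
  · rintro ⟨i, hi, rfl⟩
    rw [hE, hE, hi]
  · intro h
    have h2 : f (u⁻¹ i') = f j := by
      apply map_add_inj (L := L)
      rw [← hE, ← hE]
      simpa using h
    exact ⟨u⁻¹ i', h2, by simp⟩

theorem iter_img_blk (m : ℕ) (j : ZMod n) :
    (fun T : Finset (ZMod n) => T.image ⇑u)^[m] (blk f j) = blk f ((⇑u)^[m] j) := by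
  induction m with
  | zero => rfl
  | succ m ih =>
    rw [Function.iterate_succ_apply', Function.iterate_succ_apply', ih]
    exact img_blk hE _

theorem val_iter (m : ℕ) (j : ZMod n) :
    f ((⇑u)^[m] j) = Option.map (fun x => x + m • L) (f j) := by
  induction m with
  | zero => cases h : f j <;> simp [h]
  | succ m ih =>
    rw [Function.iterate_succ_apply', hE, ih, Option.map_map]
    congr 1
    funext x
    simp only [Function.comp, succ_nsmul, add_assoc]

theorem stable_iff (hL : L ≠ 0) (j : ZMod n) :
    (blk f j).image ⇑u = blk f j ↔ f j = none := by
  rw [img_blk hE, blk_eq_iff]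
  constructor
  · intro h
    rw [hE] at h
    cases hfj : f j with
    | none => rfl
    | some v =>
      rw [hfj] at h
      simp only [Option.map_some] at h
      exact absurd (by simpa using (Option.some_injective _ h)) hL
  · intro h; rw [hE, h]; rfl

theorem blocks_admissible (hL : L ≠ 0) (hsmul : ∀ m : ℕ, m • L = 0 ↔ d ∣ m) :
    IsAdmissible n d u (blocks f) := by
  refine ⟨⟨?_, ?_⟩, ?_, ?_, ?_⟩
  · rintro A hA
    obtain ⟨j, rfl⟩ := mem_blocks.1 hA
    exact ⟨j, self_mem_blk j⟩
  · intro a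
    refine ⟨blk f a, ⟨blk_mem_blocks a, self_mem_blk a⟩, ?_⟩
    rintro B ⟨hB, haB⟩
    obtain ⟨j, rfl⟩ := mem_blocks.1 hB
    exact (blk_eq_of_eq (mem_blk.1 haB)).symm
  · intro A hA
    obtain ⟨j, rfl⟩ := mem_blocks.1 hA
    rw [img_blk hE]
    exact blk_mem_blocks _
  · intro A hA B hB hA' hB'
    obtain ⟨i, rfl⟩ := mem_blocks.1 hA
    obtain ⟨j, rfl⟩ := mem_blocks.1 hB
    rw [stable_iff hE hL] at hA' hB'
    exact blk_eq_of_eq (hA'.trans hB'.symm)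
  · intro A hA hA'
    obtain ⟨j, rfl⟩ := mem_blocks.1 hA
    rw [Ne, stable_iff hE hL] at hA'
    obtain ⟨v, hv⟩ := Option.ne_none_iff_exists'.1 hA'
    have key : ∀ m : ℕ, ((fun T : Finset (ZMod n) => T.image ⇑u)^[m] (blk f j) = blk f j ↔ d ∣ m) := by
      intro m
      rw [iter_img_blk hE, blk_eq_iff, val_iter hE, hv]
      simp only [Option.map_some, Option.some_inj]
      rw [← hsmul m]
      constructor
      · intro h
        have h2 : v + m • L = v + 0 := by rw [add_zero]; exact h
        exact add_left_cancel h2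
      · intro h; rw [h, add_zero]
    refine ⟨(key d).2 dvd_rfl, fun m hm hmd h => ?_⟩
    exact absurd (Nat.le_of_dvd hm ((key m).1 h)) (not_le.2 hmd)

end Equi

section Fiber

variable {P : Finset (Finset (ZMod n))}

/-- The unique block of the partition `P` containing `a`. -/
def blkP (hP : IsAdmissible n d u P) (a : ZMod n) : Finset (ZMod n) :=
  (hP.1.2 a).choose

theorem blkP_mem (hP : IsAdmissible n d u P) (a : ZMod n) : blkP hP a ∈ P := (hP.1.2 a).choose_spec.1.1

theorem mem_blkP (hP : IsAdmissible n d u P) (a : ZMod n) : a ∈ blkP hP a := (hP.1.2 a).choose_spec.1.2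

theorem blkP_unique (hP : IsAdmissible n d u P) {a : ZMod n} {B : Finset (ZMod n)} (hB : B ∈ P) (haB : a ∈ B) :
    B = blkP hP a := by
  have h2 := (hP.1.2 a).choose_spec.2
  have h3 := h2 B ⟨hB, haB⟩
  have h4 := h2 (blkP hP a) ⟨blkP_mem hP a, mem_blkP hP a⟩
  rw [h3, h4]

theorem blkP_image (hP : IsAdmissible n d u P) (a : ZMod n) : (blkP hP a).image ⇑u = blkP hP (u a) :=
  blkP_unique hP (hP.2.1 _ (blkP_mem hP a))
    (Finset.mem_image_of_mem _ (mem_blkP hP a))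

theorem memS_image (hP : IsAdmissible n d u P) {A : Finset (ZMod n)} (hA : A ∈ P) :
    A.image ⇑u ∈ P.filter (fun B => B.image ⇑u ≠ B) ↔
      A ∈ P.filter (fun B => B.image ⇑u ≠ B) := by
  rw [Finset.mem_filter, Finset.mem_filter]
  constructor
  · rintro ⟨h1, h2⟩
    exact ⟨hA, fun h => h2 (by rw [h]; exact h)⟩
  · rintro ⟨h1, h2⟩
    refine ⟨hP.2.1 _ hA, fun h => h2 (sig_inj u h)⟩

theorem stable_unique (hP : IsAdmissible n d u P) {A B : Finset (ZMod n)} (hA : A ∈ P) (hB : B ∈ P)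
    (hA' : A ∉ P.filter (fun C => C.image ⇑u ≠ C)) (hB' : B ∉ P.filter (fun C => C.image ⇑u ≠ C)) :
    A = B := by
  rw [Finset.mem_filter] at hA' hB'
  push_neg at hA' hB'
  exact hP.2.2.1 A hA B hB (hA' hA) (hB' hB)

/-- Forward direction: extract the labelling from an equivariant function. -/
def toLab (hP : IsAdmissible n d u P) (f : ZMod n → Option (ZMod n)) (A : Finset (ZMod n)) : ZMod n :=
  if h : A ∈ P.filter (fun B => B.image ⇑u ≠ B) then
    (f (hP.1.1 A (Finset.mem_of_mem_filter A h)).choose).getD 0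
  else 0

/-- Backward direction: build the equivariant function from a labelling. -/
def toFun' (hP : IsAdmissible n d u P) (φ : Finset (ZMod n) → ZMod n) (a : ZMod n) : Option (ZMod n) :=
  if blkP hP a ∈ P.filter (fun B => B.image ⇑u ≠ B) then some (φ (blkP hP a)) else none

section FProps

variable (hP : IsAdmissible n d u P) {f : ZMod n → Option (ZMod n)}
  (hE : ∀ j : ZMod n, f (u j) = Option.map (fun x => x + L) (f j)) (hbl : blocks f = P)
include hbl

theorem f_const {A : Finset (ZMod n)} (hA : A ∈ P) {a b : ZMod n}
    (ha : a ∈ A) (hb : b ∈ A) : f a = f b := by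
  rw [← hbl] at hA
  obtain ⟨j, rfl⟩ := mem_blocks.1 hA
  rw [mem_blk.1 ha, mem_blk.1 hb]

theorem blkP_eq_blk (a : ZMod n) : blkP hP a = blk f a := by
  have h1 : blk f a ∈ P := hbl ▸ blk_mem_blocks a
  exact (blkP_unique hP h1 (self_mem_blk a)).symm

include hE

theorem f_some (hL : L ≠ 0) {A : Finset (ZMod n)} (hA : A ∈ P.filter (fun B => B.image ⇑u ≠ B))
    {a : ZMod n} (ha : a ∈ A) : ∃ v, f a = some v := by
  rw [Finset.mem_filter] at hA
  have h1 : A ∈ blocks f := hbl ▸ hA.1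
  obtain ⟨j, rfl⟩ := mem_blocks.1 h1
  have h2 : f j ≠ none := fun h => hA.2 ((stable_iff hE hL j).2 h)
  rw [mem_blk.1 ha]
  exact Option.ne_none_iff_exists'.1 h2

theorem f_none (hL : L ≠ 0) {A : Finset (ZMod n)} (hA : A ∈ P)
    (hA' : A ∉ P.filter (fun B => B.image ⇑u ≠ B)) {a : ZMod n} (ha : a ∈ A) : f a = none := by
  rw [Finset.mem_filter] at hA'
  push_neg at hA'
  have h1 : A ∈ blocks f := hbl ▸ hA
  obtain ⟨j, rfl⟩ := mem_blocks.1 h1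
  rw [mem_blk.1 ha]
  exact (stable_iff hE hL j).1 (hA' hA)

end FProps

/-- The fiber of `blocks` over an admissible partition `P` is equivalent to the set of
labellings of the non-stable blocks. -/
noncomputable def fiberEquiv (hL : L ≠ 0) (hsmul : ∀ m : ℕ, m • L = 0 ↔ d ∣ m)
    {P : Finset (Finset (ZMod n))} (hP : IsAdmissible n d u P) :
    {f : ZMod n → Option (ZMod n) //
        (∀ j : ZMod n, f (u j) = Option.map (fun x => x + L) (f j)) ∧ blocks f = P} ≃
      {φ : Finset (ZMod n) → ZMod n // Cnd u L (P.filter fun A => A.image ⇑u ≠ A) φ} := by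
  classical
  set S := P.filter (fun A => A.image ⇑u ≠ A) with hSdef
  have hmemS : ∀ A, A ∈ S ↔ A ∈ P ∧ A.image ⇑u ≠ A := fun A => Finset.mem_filter
  -- the forward map satisfies `Cnd`
  have hto : ∀ (f : ZMod n → Option (ZMod n)),
      (∀ j : ZMod n, f (u j) = Option.map (fun x => x + L) (f j)) → blocks f = P →
      Cnd u L S (toLab hP f) := by
    intro f hE hbl
    have hgv : ∀ (A : Finset (ZMod n)) (hA : A ∈ S) (a : ZMod n), a ∈ A →
        f a = some (toLab hP f A) := by
      intro A hA a ha
      obtain ⟨v, hv⟩ := f_some hE hbl hL hA ha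
      have hch := (hP.1.1 A (Finset.mem_of_mem_filter A hA)).choose_spec
      have h2 : f (hP.1.1 A (Finset.mem_of_mem_filter A hA)).choose = f a :=
        f_const hbl (Finset.mem_of_mem_filter A hA) hch ha
      rw [toLab, dif_pos hA, h2, hv]
      rfl
    refine ⟨?_, ?_, ?_⟩
    · intro A hA B hB h
      rw [Finset.mem_coe] at hA hB
      have ha := mem_blkP hP ((hP.1.1 A (Finset.mem_of_mem_filter A hA)).choose)
      have h1 := hgv A hA _ (hP.1.1 A (Finset.mem_of_mem_filter A hA)).choose_spec
      have h2 := hgv B hB _ (hP.1.1 B (Finset.mem_of_mem_filter B hB)).choose_spec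
      rw [h] at h1
      have h3 : f ((hP.1.1 A (Finset.mem_of_mem_filter A hA)).choose)
          = f ((hP.1.1 B (Finset.mem_of_mem_filter B hB)).choose) := by rw [h1, h2]
      have h4 : blk f ((hP.1.1 A (Finset.mem_of_mem_filter A hA)).choose)
          = blk f ((hP.1.1 B (Finset.mem_of_mem_filter B hB)).choose) := blk_eq_of_eq h3
      have h5 : A = blkP hP ((hP.1.1 A (Finset.mem_of_mem_filter A hA)).choose) :=
        blkP_unique hP (Finset.mem_of_mem_filter A hA)
          (hP.1.1 A (Finset.mem_of_mem_filter A hA)).choose_spec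
      have h6 : B = blkP hP ((hP.1.1 B (Finset.mem_of_mem_filter B hB)).choose) :=
        blkP_unique hP (Finset.mem_of_mem_filter B hB)
          (hP.1.1 B (Finset.mem_of_mem_filter B hB)).choose_spec
      rw [h5, h6, blkP_eq_blk hP hbl, blkP_eq_blk hP hbl, h4]
    · intro A hA
      have hσA : A.image ⇑u ∈ S := (memS_image hP (Finset.mem_of_mem_filter A hA)).2 hA
      -- pick an element of A
      have haA := (hP.1.1 A (Finset.mem_of_mem_filter A hA)).choose_spec
      set a := (hP.1.1 A (Finset.mem_of_mem_filter A hA)).choose with hadef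
      have h1 : u a ∈ A.image ⇑u := Finset.mem_image_of_mem _ haA
      have h2 := hgv _ hσA _ h1
      have h3 := hgv _ hA _ haA
      rw [hE a, h3] at h2
      simpa using h2.symm
    · intro A hA
      rw [toLab, dif_neg hA]
  -- the backward map is equivariant with blocks `P`
  have hback : ∀ (φ : Finset (ZMod n) → ZMod n), Cnd u L S φ →
      (∀ j : ZMod n, toFun' hP φ (u j) = Option.map (fun x => x + L) (toFun' hP φ j)) ∧
        blocks (toFun' hP φ) = P := by
    intro φ hφ
    have hEq : ∀ j : ZMod n, toFun' hP φ (u j) = Option.map (fun x => x + L) (toFun' hP φ j) := by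
      intro a
      rw [toFun', toFun', ← blkP_image hP a]
      by_cases h : blkP hP a ∈ S
      · rw [if_pos ((memS_image hP (blkP_mem hP a)).2 h), if_pos h]
        rw [hφ.2.1 _ h]
        rfl
      · rw [if_neg (fun hc => h ((memS_image hP (blkP_mem hP a)).1 hc)), if_neg h]
        rfl
    refine ⟨hEq, ?_⟩
    have hblk : ∀ j : ZMod n, blk (toFun' hP φ) j = blkP hP j := by
      intro j
      ext i
      rw [mem_blk]
      by_cases hj : blkP hP j ∈ S
      · constructor
        · intro h
          rw [toFun', toFun'] at h
          rw [if_pos hj] at h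
          by_cases hi : blkP hP i ∈ S
          · rw [if_pos hi] at h
            have h2 : blkP hP i = blkP hP j :=
              hφ.1 (Finset.mem_coe.2 hi) (Finset.mem_coe.2 hj) (Option.some_injective _ h)
            rw [← h2]
            exact mem_blkP hP i
          · rw [if_neg hi] at h
            exact absurd h (by simp)
        · intro h
          have h2 : blkP hP j = blkP hP i := blkP_unique hP (blkP_mem hP j) h
          rw [toFun', toFun', ← h2]
      · constructor
        · intro h
          rw [toFun', toFun'] at h
          rw [if_neg hj] at h
          by_cases hi : blkP hP i ∈ S
          · rw [if_pos hi] at h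
            exact absurd h (by simp)
          · rw [if_neg hi] at h
            have h2 : blkP hP i = blkP hP j :=
              stable_unique hP (blkP_mem hP i) (blkP_mem hP j) hi hj
            rw [← h2]
            exact mem_blkP hP i
        · intro h
          have h2 : blkP hP j = blkP hP i := blkP_unique hP (blkP_mem hP j) h
          rw [toFun', toFun', ← h2]
    ext A
    rw [blocks, Finset.mem_image]
    constructor
    · rintro ⟨j, _, rfl⟩
      rw [hblk j]
      exact blkP_mem hP j
    · intro hA
      obtain ⟨a, ha⟩ := hP.1.1 A hA
      exact ⟨a, Finset.mem_univ a, by rw [hblk a, ← blkP_unique hP hA ha]⟩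
  refine
    { toFun := fun fp => ⟨toLab hP fp.1, hto fp.1 fp.2.1 fp.2.2⟩
      invFun := fun φp => ⟨toFun' hP φp.1, hback φp.1 φp.2⟩
      left_inv := ?_
      right_inv := ?_ }
  · rintro ⟨f, hE, hbl⟩
    apply Subtype.ext
    funext a
    show toFun' hP (toLab hP f) a = f a
    rw [toFun']
    by_cases h : blkP hP a ∈ S
    · rw [if_pos h]
      have h1 := (hP.1.1 _ (Finset.mem_of_mem_filter _ h)).choose_spec
      obtain ⟨v, hv⟩ := f_some hE hbl hL h (mem_blkP hP a)
      have h2 : f ((hP.1.1 _ (Finset.mem_of_mem_filter _ h)).choose) = f a :=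
        f_const hbl (Finset.mem_of_mem_filter _ h) h1 (mem_blkP hP a)
      rw [toLab, dif_pos h, h2, hv]
      rfl
    · rw [if_neg h]
      exact (f_none hE hbl hL (blkP_mem hP a) h (mem_blkP hP a)).symm
  · rintro ⟨φ, hφ⟩
    apply Subtype.ext
    funext A
    show toLab hP (toFun' hP φ) A = φ A
    by_cases h : A ∈ S
    · rw [toLab, dif_pos h]
      have h1 := (hP.1.1 A (Finset.mem_of_mem_filter A h)).choose_spec
      set a := (hP.1.1 A (Finset.mem_of_mem_filter A h)).choose with hadef
      have h2 : blkP hP a = A := (blkP_unique hP (Finset.mem_of_mem_filter A h) h1).symm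
      rw [toFun', h2, if_pos h]
      rfl
    · rw [toLab, dif_neg h]
      exact (hφ.2.2 A h).symm

end Fiber


theorem count_aux (u : Equiv.Perm (ZMod n)) (L : ZMod n) (d : ℕ) (hd0 : 0 < d) (hsmul : ∀ m : ℕ, m • L = 0 ↔ d ∣ m)
    (S : Finset (Finset (ZMod n)))
    (hinv : ∀ A ∈ S, A.image ⇑u ∈ S)
    (hfree : ∀ A ∈ S, (fun T : Finset (ZMod n) => T.image ⇑u)^[d] A = A ∧
      ∀ m : ℕ, 0 < m → m < d → (fun T : Finset (ZMod n) => T.image ⇑u)^[m] A ≠ A) :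
    d ∣ S.card ∧ Nat.card {φ : Finset (ZMod n) → ZMod n // Cnd u L S φ}
      = fallingProd n d (S.card / d) := by
  classical
  have hdL : d • L = 0 := (hsmul d).2 dvd_rfl
  have hidx_eq : ∀ a b : ℕ, a < d → b < d → a • L = b • L → a = b := by
    have key : ∀ a b : ℕ, a ≤ b → b < d → a • L = b • L → a = b := by
      intro a b hle hbd h
      have h1 : (b - a) • L + a • L = b • L := by rw [← add_nsmul, Nat.sub_add_cancel hle]
      have h3 : (b - a) • L + a • L = 0 + a • L := by rw [zero_add, h1, ← h]
      have h2 : (b - a) • L = 0 := add_right_cancel h3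
      have h4 := Nat.eq_zero_of_dvd_of_lt ((hsmul _).1 h2)
      rcases Nat.eq_zero_or_pos (b - a) with h5 | h5
      · omega
      · exact absurd (Nat.le_of_dvd h5 ((hsmul _).1 h2)) (by omega)
    intro a b had hbd h
    rcases le_total a b with hle | hle
    · exact key a b hle hbd h
    · exact (key b a hle had h.symm).symm
  revert hinv hfree
  induction S using Finset.strongInduction with
  | _ S ih =>
  intro hinv hfree
  set σ : Finset (ZMod n) → Finset (ZMod n) := fun T => T.image ⇑u with hσdef
  have σinj : Function.Injective σ := sig_inj u
  rcases S.eq_empty_or_nonempty with rfl | ⟨A₀, hA₀⟩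
  · refine ⟨by simp, ?_⟩
    have hcnd : ∀ φ : Finset (ZMod n) → ZMod n, Cnd u L ∅ φ → φ = fun _ => 0 := by
      intro φ h; funext A; exact h.2.2 A (Finset.notMem_empty A)
    have : Nat.card {φ : Finset (ZMod n) → ZMod n // Cnd u L ∅ φ} = 1 := by
      rw [Nat.card_eq_one_iff_unique]
      constructor
      · constructor
        rintro ⟨φ₁, h₁⟩ ⟨φ₂, h₂⟩
        apply Subtype.ext
        show φ₁ = φ₂
        rw [hcnd φ₁ h₁, hcnd φ₂ h₂]
      · exact ⟨⟨fun _ => 0, ⟨by simp, by simp, fun _ _ => rfl⟩⟩⟩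
    rw [this]
    simp [fallingProd]
  · -- inductive step
    have hiter_mem : ∀ m : ℕ, σ^[m] A₀ ∈ S := by
      intro m
      induction m with
      | zero => exact hA₀
      | succ m ihm => rw [Function.iterate_succ_apply']; exact hinv _ ihm
    have hdA₀ : σ^[d] A₀ = A₀ := (hfree A₀ hA₀).1
    set O : Finset (Finset (ZMod n)) := (Finset.range d).image (fun m => σ^[m] A₀) with hOdef
    have hmemO : ∀ A : Finset (ZMod n), A ∈ O ↔ ∃ m, m < d ∧ σ^[m] A₀ = A := by
      intro A
      simp only [hOdef, Finset.mem_image, Finset.mem_range]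
    have hinjle : ∀ a b : ℕ, a ≤ b → b < d → σ^[b] A₀ = σ^[a] A₀ → a = b := by
      intro a b hab hbd h
      by_contra hne
      have hlt : 0 < b - a := by omega
      have : σ^[b - a] (σ^[a] A₀) = σ^[a] A₀ := by
        rw [← Function.iterate_add_apply, Nat.sub_add_cancel hab, h]
      exact (hfree _ (hiter_mem a)).2 (b - a) hlt (by omega) this
    have hinjrange : ∀ a b : ℕ, a < d → b < d → σ^[a] A₀ = σ^[b] A₀ → a = b := by
      intro a b had hbd h
      rcases le_total a b with hab | hab
      · exact hinjle a b hab hbd h.symm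
      · exact (hinjle b a hab had h).symm
    have hcardO : O.card = d := by
      rw [hOdef, Finset.card_image_of_injOn, Finset.card_range]
      intro a ha b hb h
      exact hinjrange a b (Finset.mem_range.1 ha) (Finset.mem_range.1 hb) h
    have hOsub : O ⊆ S := by
      intro A hA
      obtain ⟨m, _, rfl⟩ := (hmemO A).1 hA
      exact hiter_mem m
    have hA₀O : A₀ ∈ O := (hmemO A₀).2 ⟨0, hd0, rfl⟩
    set S' : Finset (Finset (ZMod n)) := S \ O with hS'def
    have hS'sub : S' ⊆ S := Finset.sdiff_subset
    have hssub : S' ⊂ S := Finset.ssubset_iff_of_subset hS'sub |>.2 ⟨A₀, hA₀, by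
      simp [hS'def, hA₀O]⟩
    have hmemS' : ∀ A, A ∈ S' ↔ A ∈ S ∧ A ∉ O := by intro A; simp [hS'def]
    have hsucc_iter : ∀ m : ℕ, σ (σ^[m] A₀) = σ^[m + 1] A₀ :=
      fun m => (Function.iterate_succ_apply' σ m A₀).symm
    have hinv' : ∀ A ∈ S', σ A ∈ S' := by
      intro A hA
      rw [hmemS'] at hA ⊢
      refine ⟨hinv _ hA.1, fun hO' => ?_⟩
      obtain ⟨m, hmd, hm⟩ := (hmemO _).1 hO'
      rcases Nat.eq_zero_or_pos m with rfl | hm0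
      · have h1 : σ (σ^[d - 1] A₀) = σ A := by
          rw [hsucc_iter (d - 1)]
          have h2 : d - 1 + 1 = d := by omega
          rw [h2, hdA₀]
          exact hm
        exact hA.2 ((hmemO A).2 ⟨d - 1, by omega, σinj h1⟩)
      · have h1 : σ (σ^[m - 1] A₀) = σ A := by
          rw [hsucc_iter (m - 1)]
          have h2 : m - 1 + 1 = m := by omega
          rw [h2]
          exact hm
        exact hA.2 ((hmemO A).2 ⟨m - 1, by omega, σinj h1⟩)
    have hfree' : ∀ A ∈ S', (fun T : Finset (ZMod n) => T.image ⇑u)^[d] A = A ∧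
        ∀ m : ℕ, 0 < m → m < d → (fun T : Finset (ZMod n) => T.image ⇑u)^[m] A ≠ A :=
      fun A hA => hfree A (hS'sub hA)
    obtain ⟨hdvd', hcount'⟩ := ih S' hssub hinv' hfree'
    have hcardS : S.card = S'.card + d := by
      rw [hS'def, Finset.card_sdiff_of_subset hOsub]
      have : d ≤ S.card := hcardO ▸ Finset.card_le_card hOsub
      omega
    refine ⟨by rw [hcardS]; exact Nat.dvd_add hdvd' dvd_rfl, ?_⟩
    -- index of an element of the orbit
    set idx : Finset (ZMod n) → ℕ :=
      fun A => if h : ∃ m, m < d ∧ σ^[m] A₀ = A then Nat.find h else 0 with hidxdef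
    have idx_iter : ∀ m, m < d → idx (σ^[m] A₀) = m := by
      intro m hm
      have hex : ∃ m', m' < d ∧ σ^[m'] A₀ = σ^[m] A₀ := ⟨m, hm, rfl⟩
      rw [hidxdef]
      simp only [dif_pos hex]
      have h1 := Nat.find_spec hex
      exact hinjrange _ _ h1.1 hm h1.2
    have idx_spec : ∀ A ∈ O, idx A < d ∧ σ^[idx A] A₀ = A := by
      intro A hA
      obtain ⟨m, hmd, rfl⟩ := (hmemO A).1 hA
      rw [idx_iter m hmd]
      exact ⟨hmd, rfl⟩
    have idxA₀ : idx A₀ = 0 := by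
      have := idx_iter 0 hd0
      simpa using this
    -- value propagation for equivariant φ
    have hval : ∀ φ : Finset (ZMod n) → ZMod n, Cnd u L S φ →
        ∀ m : ℕ, φ (σ^[m] A₀) = φ A₀ + m • L := by
      intro φ hφ m
      induction m with
      | zero => simp
      | succ m ihm =>
        rw [← hsucc_iter m]
        have h1 := hφ.2.1 _ (hiter_mem m)
        rw [hσdef] at ihm ⊢
        rw [h1, ihm, succ_nsmul, add_assoc]
    -- image invariance for φ' on S'
    have himg : ∀ φ' : Finset (ZMod n) → ZMod n, Cnd u L S' φ' →
        ∀ j : ℕ, ∀ x ∈ S'.image φ', x + j • L ∈ S'.image φ' := by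
      intro φ' hφ' j
      induction j with
      | zero => intro x hx; simpa using hx
      | succ j ihj =>
        intro x hx
        obtain ⟨B, hB, hBx⟩ := Finset.mem_image.1 (ihj x hx)
        have h2 : φ' (σ B) = φ' B + L := hφ'.2.1 B hB
        have h3 : x + (j + 1) • L = φ' (σ B) := by
          rw [h2, hBx, succ_nsmul, ← add_assoc]
        rw [h3]
        exact Finset.mem_image_of_mem _ (hinv' B hB)
    set F : (Finset (ZMod n) → ZMod n) → (Finset (ZMod n) → ZMod n) :=
      fun φ A => if A ∈ S' then φ A else 0 with hFdef
    set G : (Finset (ZMod n) → ZMod n) → ZMod n → (Finset (ZMod n) → ZMod n) :=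
      fun φ' v A => if A ∈ O then v + (idx A) • L else φ' A with hGdef
    have hFS' : ∀ (φ : Finset (ZMod n) → ZMod n) (A : Finset (ZMod n)), A ∈ S' → F φ A = φ A := by
      intro φ A hA; rw [hFdef]; simp only [if_pos hA]
    have hFout : ∀ (φ : Finset (ZMod n) → ZMod n) (A : Finset (ZMod n)), A ∉ S' → F φ A = 0 := by
      intro φ A hA; rw [hFdef]; simp only [if_neg hA]
    have hGO : ∀ (φ' : Finset (ZMod n) → ZMod n) (v : ZMod n) (A : Finset (ZMod n)),
        A ∈ O → G φ' v A = v + (idx A) • L := by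
      intro φ' v A hA; rw [hGdef]; simp only [if_pos hA]
    have hGout : ∀ (φ' : Finset (ZMod n) → ZMod n) (v : ZMod n) (A : Finset (ZMod n)),
        A ∉ O → G φ' v A = φ' A := by
      intro φ' v A hA; rw [hGdef]; simp only [if_neg hA]
    have hF : ∀ φ : Finset (ZMod n) → ZMod n, Cnd u L S φ → Cnd u L S' (F φ) := by
      intro φ hφ
      refine ⟨?_, ?_, ?_⟩
      · intro a ha b hb h
        rw [Finset.mem_coe] at ha hb
        rw [hFS' φ a ha, hFS' φ b hb] at h
        exact hφ.1 (Finset.mem_coe.2 (hS'sub ha)) (Finset.mem_coe.2 (hS'sub hb)) h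
      · intro A hA
        have h1 : σ A ∈ S' := hinv' A hA
        rw [hFS' φ _ h1, hFS' φ A hA]
        exact hφ.2.1 A (hS'sub hA)
      · exact fun A hA => hFout φ A hA
    have hFv : ∀ φ : Finset (ZMod n) → ZMod n, Cnd u L S φ → φ A₀ ∉ S'.image (F φ) := by
      intro φ hφ h
      obtain ⟨B, hB, hBx⟩ := Finset.mem_image.1 h
      rw [hFS' φ B hB] at hBx
      have hBA : B = A₀ := hφ.1 (Finset.mem_coe.2 (hS'sub hB)) (Finset.mem_coe.2 hA₀) hBx
      rw [hBA] at hB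
      exact ((hmemS' A₀).1 hB).2 hA₀O
    have hG : ∀ (φ' : Finset (ZMod n) → ZMod n) (v : ZMod n), Cnd u L S' φ' →
        v ∉ S'.image φ' → Cnd u L S (G φ' v) := by
      intro φ' v hφ' hv
      refine ⟨?_, ?_, ?_⟩
      · -- injectivity
        intro a ha b hb h
        rw [Finset.mem_coe] at ha hb
        by_cases haO : a ∈ O <;> by_cases hbO : b ∈ O
        · obtain ⟨hia, ha2⟩ := idx_spec a haO
          obtain ⟨hib, hb2⟩ := idx_spec b hbO
          rw [hGO _ _ a haO, hGO _ _ b hbO] at h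
          have h2 : (idx a) • L = (idx b) • L := add_left_cancel h
          have h3 : idx a = idx b := hidx_eq _ _ hia hib h2
          rw [← ha2, ← hb2, h3]
        · rw [hGO _ _ a haO, hGout _ _ b hbO] at h
          obtain ⟨hia, _⟩ := idx_spec a haO
          exfalso
          apply hv
          have hbS' : b ∈ S' := (hmemS' b).2 ⟨hb, hbO⟩
          have h2 : φ' b + (d - idx a) • L ∈ S'.image φ' :=
            himg φ' hφ' _ _ (Finset.mem_image_of_mem _ hbS')
          have h3 : φ' b + (d - idx a) • L = v := by
            rw [← h, add_assoc, ← add_nsmul, Nat.add_sub_cancel' (le_of_lt hia), hdL, add_zero]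
          rwa [h3] at h2
        · rw [hGout _ _ a haO, hGO _ _ b hbO] at h
          obtain ⟨hib, _⟩ := idx_spec b hbO
          exfalso
          apply hv
          have haS' : a ∈ S' := (hmemS' a).2 ⟨ha, haO⟩
          have h2 : φ' a + (d - idx b) • L ∈ S'.image φ' :=
            himg φ' hφ' _ _ (Finset.mem_image_of_mem _ haS')
          have h3 : φ' a + (d - idx b) • L = v := by
            rw [h, add_assoc, ← add_nsmul, Nat.add_sub_cancel' (le_of_lt hib), hdL, add_zero]
          rwa [h3] at h2
        · rw [hGout _ _ a haO, hGout _ _ b hbO] at h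
          exact hφ'.1 (Finset.mem_coe.2 ((hmemS' a).2 ⟨ha, haO⟩))
            (Finset.mem_coe.2 ((hmemS' b).2 ⟨hb, hbO⟩)) h
      · -- equivariance
        intro A hA
        have hAσ : A.image ⇑u = σ A := rfl
        by_cases hAO : A ∈ O
        · obtain ⟨hia, ha2⟩ := idx_spec A hAO
          by_cases hlast : idx A + 1 < d
          · have hσA : σ A ∈ O := (hmemO _).2 ⟨idx A + 1, hlast, by
              rw [← hsucc_iter, ha2]⟩
            have hidxσ : idx (σ A) = idx A + 1 := by
              have h5 := idx_iter (idx A + 1) hlast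
              rwa [← hsucc_iter, ha2] at h5
            rw [hAσ, hGO _ _ _ hσA, hidxσ, hGO _ _ _ hAO, succ_nsmul, ← add_assoc]
          · have hd1 : idx A + 1 = d := by omega
            have hσA : σ A = A₀ := by
              rw [← ha2, hsucc_iter, hd1, hdA₀]
            rw [hAσ, hσA, hGO _ _ _ hA₀O, idxA₀, zero_smul, add_zero, hGO _ _ _ hAO,
              add_assoc, ← succ_nsmul, hd1, hdL, add_zero]
        · have hAS' : A ∈ S' := (hmemS' A).2 ⟨hA, hAO⟩
          have h1 : σ A ∈ S' := hinv' A hAS'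
          have h2 : σ A ∉ O := ((hmemS' _).1 h1).2
          rw [hAσ, hGout _ _ _ h2, hGout _ _ _ hAO]
          exact hφ'.2.1 A hAS'
      · intro A hA
        have h1 : A ∉ O := fun h => hA (hOsub h)
        have h2 : A ∉ S' := fun h => hA (hS'sub h)
        rw [hGout _ _ A h1]
        exact hφ'.2.2 A h2
    -- the equivalence
    have e : {φ : Finset (ZMod n) → ZMod n // Cnd u L S φ} ≃
        {q : {φ' : Finset (ZMod n) → ZMod n // Cnd u L S' φ'} × ZMod n //
          q.2 ∉ S'.image (q.1 : _ → _)} :=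
      { toFun := fun φ => ⟨(⟨F φ.1, hF φ.1 φ.2⟩, φ.1 A₀), hFv φ.1 φ.2⟩
        invFun := fun q => ⟨G q.1.1.1 q.1.2, hG _ _ q.1.1.2 q.2⟩
        left_inv := by
          rintro ⟨φ, hφ⟩
          apply Subtype.ext
          funext A
          show G (F φ) (φ A₀) A = φ A
          by_cases hAO : A ∈ O
          · rw [hGO _ _ _ hAO]
            obtain ⟨hia, ha2⟩ := idx_spec A hAO
            have h6 := hval φ hφ (idx A)
            rw [ha2] at h6
            exact h6.symm
          · rw [hGout _ _ _ hAO]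
            by_cases hAS' : A ∈ S'
            · exact hFS' φ A hAS'
            · rw [hFout φ A hAS']
              exact (hφ.2.2 A (fun h => hAS' ((hmemS' A).2 ⟨h, hAO⟩))).symm
        right_inv := by
          rintro ⟨⟨⟨φ', hφ'⟩, v⟩, hv⟩
          apply Subtype.ext
          simp only [Prod.mk.injEq]
          constructor
          · apply Subtype.ext
            funext A
            show F (G φ' v) A = φ' A
            by_cases hAS' : A ∈ S'
            · rw [hFS' _ A hAS', hGout _ _ _ ((hmemS' A).1 hAS').2]
            · rw [hFout _ A hAS']
              exact (hφ'.2.2 A hAS').symm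
          · show G φ' v A₀ = v
            rw [hGO _ _ _ hA₀O, idxA₀, zero_smul, add_zero]
        }
    rw [Nat.card_congr e]
    -- count the target
    have e2 : {q : {φ' : Finset (ZMod n) → ZMod n // Cnd u L S' φ'} × ZMod n //
          q.2 ∉ S'.image (q.1 : _ → _)} ≃
        Σ φ' : {φ' : Finset (ZMod n) → ZMod n // Cnd u L S' φ'},
          {v : ZMod n // v ∉ S'.image (φ' : _ → _)} :=
      Equiv.subtypeProdEquivSigmaSubtype
        (fun (φ' : {φ' : Finset (ZMod n) → ZMod n // Cnd u L S' φ'}) (v : ZMod n) =>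
          v ∉ S'.image (φ' : _ → _))
    rw [Nat.card_congr e2, Nat.card_eq_fintype_card, Fintype.card_sigma]
    have hfiber : ∀ φ' : {φ' : Finset (ZMod n) → ZMod n // Cnd u L S' φ'},
        Nat.card {v : ZMod n // v ∉ S'.image (φ' : _ → _)} = n - S'.card := by
      rintro ⟨φ', hφ'⟩
      rw [Nat.card_eq_fintype_card, Fintype.card_subtype_compl]
      have h1 : Fintype.card {v : ZMod n // v ∈ S'.image φ'} = (S'.image φ').card :=
        Fintype.card_coe _
      rw [ZMod.card, h1, Finset.card_image_of_injOn hφ'.1]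
    have hf2 : ∀ φ' : {φ' : Finset (ZMod n) → ZMod n // Cnd u L S' φ'},
        Fintype.card {v : ZMod n // v ∉ S'.image (φ' : _ → _)} = n - S'.card := by
      intro φ'; rw [← Nat.card_eq_fintype_card]; exact hfiber φ'
    rw [Finset.sum_congr rfl (fun φ' _ => hf2 φ')]
    rw [Finset.sum_const, Finset.card_univ, ← Nat.card_eq_fintype_card, hcount', smul_eq_mul]
    have hk : S.card / d = S'.card / d + 1 := by rw [hcardS, Nat.add_div_right _ hd0]
    rw [hk]
    show fallingProd n d (S'.card / d) * (n - S'.card) = fallingProd n d (S'.card / d + 1)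
    rw [fallingProd, fallingProd, Finset.prod_range_succ, Nat.div_mul_cancel hdvd']

end Stmt3Aux

end Stmt3Aux

/-- Identify `[n]` with `ZMod n`, so `c^l` acts by `j ↦ j + l`; extend the action to
`[n] ∪ {0}` (modelled by `Option (ZMod n)`) by fixing the extra point.

Proposition: for `u ∈ S_n` and `c^l ≠ 1` (i.e. `n ∤ l`), with `d = n / gcd(l,n)`, the
number of `(u, c^l)`-equivariant functions `f : [n] → [n] ∪ {0}` equals the sum over all
`(u,d)`-admissible set partitions `π` of `[n]` of `n(n-d)(n-2d)⋯(n-(k_π-1)d)`. -/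
theorem stmt3 (n : ℕ) [NeZero n] (l : ℤ) (hl : ¬ (n : ℤ) ∣ l) (u : Equiv.Perm (ZMod n)) :
    Nat.card {f : ZMod n → Option (ZMod n) //
        ∀ j : ZMod n, f (u j) = Option.map (fun x => x + (l : ZMod n)) (f j)} =
      ∑ P : Finset (Finset (ZMod n)),
        if IsAdmissible n (n / l.gcd n) u P then
          fallingProd n (n / l.gcd n) (numDOrbits n (n / l.gcd n) u P)
        else 0 := by
  classical
  set L : ZMod n := (l : ZMod n) with hLdef
  set d : ℕ := n / l.gcd n with hddef
  have hord : addOrderOf L = d := by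
    have h1 : L = (l.natAbs : ZMod n) ∨ L = -(l.natAbs : ZMod n) := by
      rcases Int.natAbs_eq l with h | h
      · left; rw [hLdef]; conv_lhs => rw [h, Int.cast_natCast]
      · right; rw [hLdef]; conv_lhs => rw [h]; rw [Int.cast_neg, Int.cast_natCast]
    have h2 : addOrderOf ((l.natAbs : ℕ) : ZMod n) = n / n.gcd l.natAbs :=
      ZMod.addOrderOf_coe _ (NeZero.ne n)
    have h3 : n.gcd l.natAbs = l.gcd n := Nat.gcd_comm _ _
    rcases h1 with h | h <;> rw [h]
    · rw [h2, h3]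
    · rw [addOrderOf_neg, h2, h3]
  have hL : L ≠ 0 := by
    rw [hLdef, Ne, ZMod.intCast_zmod_eq_zero_iff_dvd]; exact hl
  have hd0 : 0 < d := hord ▸ addOrderOf_pos L
  have hsmul : ∀ m : ℕ, m • L = 0 ↔ d ∣ m := by
    intro m; rw [← hord, ← addOrderOf_dvd_iff_nsmul_eq_zero]
  -- abbreviate the equivariance condition
  set E : (ZMod n → Option (ZMod n)) → Prop :=
    fun f => ∀ j : ZMod n, f (u j) = Option.map (fun x => x + L) (f j) with hEdef
  have lhs_eq : Nat.card {f : ZMod n → Option (ZMod n) // E f}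
      = (Finset.univ.filter E).card := by
    rw [Nat.card_eq_fintype_card, Fintype.card_subtype]
  rw [lhs_eq]
  rw [Finset.card_eq_sum_card_fiberwise
    (f := Stmt3Aux.blocks) (t := Finset.univ) (fun x _ => Finset.mem_univ _)]
  refine Finset.sum_congr rfl ?_
  intro P _
  have hcard : ((Finset.univ.filter E).filter fun f => Stmt3Aux.blocks f = P).card
      = Nat.card {f : ZMod n → Option (ZMod n) // E f ∧ Stmt3Aux.blocks f = P} := by
    rw [Nat.card_eq_fintype_card, Fintype.card_subtype, Finset.filter_filter]
  rw [hcard]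
  by_cases hP : IsAdmissible n d u P
  · rw [if_pos hP]
    have := Nat.card_congr (Stmt3Aux.fiberEquiv hL hsmul hP)
    rw [this]
    have hinv : ∀ A ∈ (P.filter fun A => A.image ⇑u ≠ A), A.image ⇑u ∈ (P.filter fun A => A.image ⇑u ≠ A) := by
      intro A hA
      rw [Finset.mem_filter] at hA ⊢
      exact ⟨hP.2.1 A hA.1, fun h => hA.2 (Stmt3Aux.sig_inj u h)⟩
    have hfree : ∀ A ∈ (P.filter fun A => A.image ⇑u ≠ A),
        (fun T : Finset (ZMod n) => T.image ⇑u)^[d] A = A ∧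
        ∀ m : ℕ, 0 < m → m < d → (fun T : Finset (ZMod n) => T.image ⇑u)^[m] A ≠ A := by
      intro A hA
      rw [Finset.mem_filter] at hA
      exact hP.2.2.2 A hA.1 hA.2
    rw [(Stmt3Aux.count_aux u L d hd0 hsmul _ hinv hfree).2]
    rfl
  · rw [if_neg hP]
    have : IsEmpty {f : ZMod n → Option (ZMod n) // E f ∧ Stmt3Aux.blocks f = P} := by
      refine ⟨fun ⟨f, hf⟩ => hP ?_⟩
      rw [← hf.2]
      exact Stmt3Aux.blocks_admissible hf.1 hL hsmul
    exact Nat.card_of_isEmpty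
end

section
/- Let V be a real inner product space of finite dimension n >= 1, let W be a finite group of linear isometries of V acting irreducibly on V (the only W-invariant subspaces are 0 and V), and let T be the set of elements t of W that are reflections; for each t in T choose a root vector alpha_t with <alpha_t, alpha_t> = 2 such that t(x) = x - <x, alpha_t> alpha_t for all x in V. Then for all a, b in V, n times the sum over t in T of <a, alpha_t><b, alpha_t> equals 2|T| times <a, b>. In particular, if h is a positive integer with 2|T| = hn (as holds for the Coxeter number h of an irreducible real reflection group), then the sum over t in T of <a, alpha_t><b, alpha_t> equals h<a, b>. -/
open scoped RealInnerProductSpace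
open Module

/-- Lemma: let `V` be a real inner product space of dimension `n ≥ 1`, `W` a finite group
of linear isometries of `V` acting irreducibly, `T` the set of reflections in `W`
(elements `t ∈ W` with `t² = 1` whose fixed subspace is a hyperplane), and for each
`t ∈ T` let `α t` be a root vector: `⟪α t, α t⟫ = 2` and `t x = x - ⟪x, α t⟫ • α t`.
Then for all `a, b ∈ V`,
`n * ∑_{t ∈ T} ⟪a, α t⟫⟪b, α t⟫ = 2|T| * ⟪a, b⟫`; in particular, if `h > 0` satisfies
`2|T| = h n` then `∑_{t ∈ T} ⟪a, α t⟫⟪b, α t⟫ = h ⟪a, b⟫`. -/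
theorem stmt6 (n : ℕ) (hn : 1 ≤ n) (V : Type) [NormedAddCommGroup V]
    [InnerProductSpace ℝ V] [FiniteDimensional ℝ V] (hdim : finrank ℝ V = n)
    (W : Subgroup (V ≃ₗᵢ[ℝ] V)) [Finite W]
    (hirr : ∀ U : Submodule ℝ V, (∀ w ∈ W, ∀ x ∈ U, w x ∈ U) → U = ⊥ ∨ U = ⊤)
    (T : Finset (V ≃ₗᵢ[ℝ] V))
    (hT : ∀ t : V ≃ₗᵢ[ℝ] V, t ∈ T ↔ t ∈ W ∧ t * t = 1 ∧
      finrank ℝ (LinearMap.ker ((t.toLinearEquiv : V →ₗ[ℝ] V) - LinearMap.id)) = n - 1)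
    (α : (V ≃ₗᵢ[ℝ] V) → V)
    (hα : ∀ t ∈ T, ⟪α t, α t⟫ = 2 ∧ ∀ x : V, t x = x - ⟪x, α t⟫ • α t) :
    ∀ a b : V,
      (n : ℝ) * ∑ t ∈ T, ⟪a, α t⟫ * ⟪b, α t⟫ = 2 * T.card * ⟪a, b⟫ ∧
      ∀ h : ℕ, 0 < h → 2 * T.card = h * n →
        ∑ t ∈ T, ⟪a, α t⟫ * ⟪b, α t⟫ = h * ⟪a, b⟫ := by
  have hV : Nontrivial V := by
    apply Module.nontrivial_of_finrank_pos (R := ℝ)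
    omega
  -- The averaged operator A x = ∑ t ∈ T, ⟪x, α t⟫ • α t
  set A : V →ₗ[ℝ] V :=
    { toFun := fun x => ∑ t ∈ T, ⟪x, α t⟫ • α t
      map_add' := by
        intro x y
        simp [inner_add_left, add_smul, Finset.sum_add_distrib]
      map_smul' := by
        intro c x
        simp [real_inner_smul_left, mul_smul, Finset.smul_sum] } with hA
  have hAapp : ∀ x : V, A x = ∑ t ∈ T, ⟪x, α t⟫ • α t := fun _ => rfl
  -- key: the rank-one piece is x - t x
  have key : ∀ t ∈ T, ∀ x : V, ⟪x, α t⟫ • α t = x - t x := by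
    intro t ht x
    rw [(hα t ht).2 x]
    abel
  -- T is closed under conjugation by W
  have hconj : ∀ w ∈ W, ∀ t ∈ T, w * t * w⁻¹ ∈ T := by
    intro w hw t ht
    rcases (hT t).mp ht with ⟨htW, ht2, htk⟩
    refine (hT _).mpr ⟨mul_mem (mul_mem hw htW) (inv_mem hw), ?_, ?_⟩
    · have h1 : (w * t * w⁻¹) * (w * t * w⁻¹) = w * (t * t) * w⁻¹ := by group
      rw [h1, ht2]
      group
    · have hker : LinearMap.ker (((w * t * w⁻¹).toLinearEquiv : V →ₗ[ℝ] V) - LinearMap.id)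
          = Submodule.map (w.toLinearEquiv : V →ₗ[ℝ] V)
              (LinearMap.ker ((t.toLinearEquiv : V →ₗ[ℝ] V) - LinearMap.id)) := by
        ext x
        rw [Submodule.mem_map_equiv]
        simp only [LinearMap.mem_ker, LinearMap.sub_apply, LinearMap.id_apply, sub_eq_zero]
        constructor
        · intro hx
          have : w (t (w⁻¹ x)) = x := hx
          have := congrArg w.symm this
          simpa [LinearIsometryEquiv.coe_mul] using this
        · intro hx
          have hx' : t (w.symm x) = w.symm x := hx
          show w (t (w⁻¹ x)) = x
          rw [show (w⁻¹ : V ≃ₗᵢ[ℝ] V) x = w.symm x from rfl, hx']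
          simp
      rw [hker, LinearEquiv.finrank_map_eq, htk]
  -- A commutes with W
  have hcomm : ∀ w ∈ W, ∀ x : V, A (w x) = w (A x) := by
    intro w hw x
    have hbij : ∀ t ∈ T, w⁻¹ * t * w ∈ T := by
      intro t ht
      have := hconj w⁻¹ (inv_mem hw) t ht
      simpa [mul_assoc] using this
    calc A (w x) = ∑ t ∈ T, (w x - t (w x)) := by
          rw [hAapp]; exact Finset.sum_congr rfl fun t ht => key t ht (w x)
      _ = ∑ t ∈ T, (w x - w (t x)) := by
          refine Finset.sum_nbij' (fun t => w⁻¹ * t * w) (fun t => w * t * w⁻¹)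
            hbij (hconj w hw) ?_ ?_ ?_
          · intro t ht; group
          · intro t ht; group
          · intro t ht
            congr 1
            show t (w x) = w ((w⁻¹ * t * w) x)
            simp [LinearIsometryEquiv.coe_mul]
      _ = w (∑ t ∈ T, (x - t x)) := by
          rw [map_sum]
          exact Finset.sum_congr rfl fun t ht => by rw [map_sub]
      _ = w (A x) := by
          congr 1
          rw [hAapp]
          exact (Finset.sum_congr rfl fun t ht => key t ht x).symm
  -- A is symmetric
  have hsymm : A.IsSymmetric := by
    intro x y
    rw [hAapp, hAapp, sum_inner, inner_sum]
    refine Finset.sum_congr rfl fun t ht => ?_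
    rw [real_inner_smul_left, real_inner_smul_right, real_inner_comm (α t) y]
    ring
  -- A has an eigenvalue μ
  obtain ⟨μ, hμ⟩ : ∃ μ : ℝ, Module.End.HasEigenvalue A μ :=
    ⟨_, hsymm.hasEigenvalue_iSup_of_finiteDimensional⟩
  -- the eigenspace is W-invariant, hence all of V
  have heig : ∀ x : V, A x = μ • x := by
    have := hirr (Module.End.eigenspace A μ) ?_
    · rcases this with h | h
      · exact absurd h hμ
      · intro x
        have : x ∈ Module.End.eigenspace A μ := h ▸ Submodule.mem_top
        exact Module.End.mem_eigenspace_iff.mp this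
    · intro w hw x hx
      rw [Module.End.mem_eigenspace_iff] at hx ⊢
      rw [hcomm w hw, hx, map_smul]
  -- the bilinear identity
  have hsum : ∀ a b : V, ∑ t ∈ T, ⟪a, α t⟫ * ⟪b, α t⟫ = μ * ⟪a, b⟫ := by
    intro a b
    have h1 : ⟪A a, b⟫ = ∑ t ∈ T, ⟪a, α t⟫ * ⟪b, α t⟫ := by
      rw [hAapp, sum_inner]
      exact Finset.sum_congr rfl fun t ht => by
        rw [real_inner_smul_left, real_inner_comm (α t) b]
    have h2 : ⟪A a, b⟫ = μ * ⟪a, b⟫ := by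
      rw [heig a, real_inner_smul_left]
    rw [← h1, h2]
  -- trace computation: μ * n = 2 * |T|
  have htrace : μ * n = 2 * T.card := by
    have b := stdOrthonormalBasis ℝ V
    have h1 : ∑ i, ∑ t ∈ T, ⟪b i, α t⟫ * ⟪b i, α t⟫ = μ * n := by
      have : ∀ i, ∑ t ∈ T, ⟪b i, α t⟫ * ⟪b i, α t⟫ = μ * ⟪b i, b i⟫ := fun i => hsum _ _
      rw [Finset.sum_congr rfl fun i _ => this i]
      have hnorm : ∀ i, ⟪b i, b i⟫ = (1 : ℝ) := fun i => by
        simp [real_inner_self_eq_norm_mul_norm, b.orthonormal.1 i]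
      simp [hnorm, hdim, mul_comm]
    have h2 : ∑ i, ∑ t ∈ T, ⟪b i, α t⟫ * ⟪b i, α t⟫ = 2 * T.card := by
      rw [Finset.sum_comm]
      have : ∀ t ∈ T, ∑ i, ⟪b i, α t⟫ * ⟪b i, α t⟫ = 2 := by
        intro t ht
        have := b.sum_inner_mul_inner (α t) (α t)
        rw [(hα t ht).1] at this
        rw [← this]
        exact Finset.sum_congr rfl fun i _ => by rw [real_inner_comm (α t) (b i)]
      rw [Finset.sum_congr rfl this]
      simp [mul_comm]
    rw [← h1, h2]
  intro a b
  constructor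
  · rw [hsum a b, ← htrace]
    ring
  · intro h hh hhn
    have hn' : (0 : ℝ) < n := by exact_mod_cast Nat.lt_of_lt_of_le Nat.zero_lt_one hn
    have : (2 : ℝ) * T.card = h * n := by exact_mod_cast hhn
    have hμh : μ = h := by
      refine mul_right_cancel₀ (ne_of_gt hn') ?_
      rw [htrace, this]
    rw [hsum a b, hμh]
end

section
/- Let V be a finite-dimensional complex vector space, let w be an invertible linear endomorphism of V whose characteristic polynomial has real coefficients (as holds for any element of a complexified real reflection group), let h be a positive integer, let omega = exp(2 pi i / h), and let d be an integer. Then the function q -> det(1 - q^{h+1} w) / det(1 - q w) has a removable singularity at q = omega^d, and its limit as q tends to omega^d equals (h+1)^m, where m is the algebraic multiplicity of omega^d as an eigenvalue of w acting on V. -/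
/-!
Over an algebraically closed field, `det (1 - c • w) = ∏ (1 - c μ)` over the eigenvalues `μ` of `w`
(with multiplicity), so the quotient is a product of factors `(1 - q^(h+1) μ) / (1 - q μ)`. Since
`l = ω^d` satisfies `l^(h+1) = l`, each factor with `μ ≠ l⁻¹` tends to `1` as `q → l`, while each
factor with `μ = l⁻¹` is the geometric sum `∑_{k ≤ h} (q μ)^k`, which tends to `h + 1`. This gives
the limit `(h+1)^m` with `m` the multiplicity of `l⁻¹`; as `|l| = 1`, `l⁻¹ = conj l`, and a real
characteristic polynomial has the same multiplicity at `l` and at `conj l`.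
-/

open Filter Topology Polynomial

theorem LinearMap.det_one_sub_smul_eq_prod_roots {K V : Type*} [Field K] [IsAlgClosed K]
    [AddCommGroup V] [Module K V] [FiniteDimensional K V] (w : Module.End K V) (c : K) :
    LinearMap.det (1 - c • w) = (w.charpoly.roots.map fun μ => 1 - c * μ).prod := by
  rcases eq_or_ne c 0 with rfl | hc
  · simp
  have hsplit : (1 : Module.End K V) - c • w = c • (algebraMap K _ c⁻¹ - w) := by
    rw [smul_sub, Algebra.algebraMap_eq_smul_one, smul_smul, mul_inv_cancel₀ hc, one_smul]
  have hcard : w.charpoly.roots.card = Module.finrank K V := by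
    rw [splits_iff_card_roots.mp (IsAlgClosed.splits _), charpoly_natDegree]
  rw [hsplit, det_smul, ← eval_charpoly,
    (IsAlgClosed.splits _).eval_eq_prod_roots_of_monic (charpoly_monic w), ← hcard,
    ← Multiset.prod_replicate, ← Multiset.map_const', ← Multiset.prod_map_mul]
  simp only [mul_sub, mul_inv_cancel₀ hc]

theorem tendsto_one_sub_pow_succ_mul_div_one_sub_mul {K : Type*} [NormedField K] [DecidableEq K]
    {l : K} (hl0 : l ≠ 0) {n : ℕ} (hl : l ^ n = 1) (μ : K) :
    Tendsto (fun q => (1 - q ^ (n + 1) * μ) / (1 - q * μ)) (𝓝[≠] l)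
      (𝓝 (if μ = l⁻¹ then (n + 1 : K) else 1)) := by
  have hl1 : l ^ (n + 1) = l := by rw [pow_succ, hl, one_mul]
  split_ifs with hμ
  · subst hμ
    have hgeom : ∀ q ≠ l, (1 - q ^ (n + 1) * l⁻¹) / (1 - q * l⁻¹)
        = ∑ k ∈ Finset.range (n + 1), (q * l⁻¹) ^ k := by
      intro q hq
      have hden : 1 - q * l⁻¹ ≠ 0 := by
        rwa [sub_ne_zero, ne_comm, ← div_eq_mul_inv, ne_eq, div_eq_one_iff_eq hl0]
      rw [div_eq_iff hden, mul_comm _ (1 - q * l⁻¹), mul_neg_geom_sum, mul_pow, inv_pow, hl1]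
    have hcont : Continuous fun q : K => ∑ k ∈ Finset.range (n + 1), (q * l⁻¹) ^ k := by
      fun_prop
    have hval : ∑ k ∈ Finset.range (n + 1), (l * l⁻¹) ^ k = n + 1 := by
      simp [mul_inv_cancel₀ hl0]
    refine Tendsto.congr' (eventually_nhdsWithin_of_forall fun q hq => (hgeom q hq).symm) ?_
    simpa only [hval] using (hcont.tendsto l).mono_left nhdsWithin_le_nhds
  · have hden : 1 - l * μ ≠ 0 := fun hzero =>
      hμ (eq_inv_of_mul_eq_one_right (sub_eq_zero.mp hzero).symm)
    have hcont : ContinuousAt (fun q => (1 - q ^ (n + 1) * μ) / (1 - q * μ)) l :=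
      ContinuousAt.div (by fun_prop) (by fun_prop) hden
    have hval : (1 - l ^ (n + 1) * μ) / (1 - l * μ) = 1 := by rw [hl1, div_self hden]
    simpa only [hval] using hcont.tendsto.mono_left nhdsWithin_le_nhds

theorem LinearMap.tendsto_det_one_sub_pow_succ_smul_div_det_one_sub_smul {K V : Type*}
    [NormedField K] [IsAlgClosed K] [AddCommGroup V] [Module K V] [FiniteDimensional K V]
    (w : Module.End K V) {l : K} (hl0 : l ≠ 0) {n : ℕ} (hl : l ^ n = 1) :
    Tendsto (fun q => LinearMap.det (1 - q ^ (n + 1) • w) / LinearMap.det (1 - q • w))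
      (𝓝[≠] l) (𝓝 ((n + 1 : K) ^ w.charpoly.rootMultiplicity l⁻¹)) := by
  classical
  simp only [det_one_sub_smul_eq_prod_roots, ← Multiset.prod_map_div]
  have hlim := tendsto_multiset_prod w.charpoly.roots
    fun μ _ => tendsto_one_sub_pow_succ_mul_div_one_sub_mul hl0 hl μ
  rwa [Multiset.prod_map_eq_pow_single l⁻¹ (fun μ hμ _ => if_neg hμ), if_pos rfl,
    count_roots] at hlim

theorem Polynomial.rootMultiplicity_conj {p : ℂ[X]} (hp : ∀ i, (p.coeff i).im = 0) (a : ℂ) :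
    p.rootMultiplicity (starRingEnd ℂ a) = p.rootMultiplicity a := by
  have hmap : p.map (starRingEnd ℂ) = p := by
    ext i
    rw [coeff_map, Complex.conj_eq_iff_im.mpr (hp i)]
  rw [eq_rootMultiplicity_map (starRingEnd ℂ).injective a, hmap]

theorem Complex.exp_two_pi_mul_I_div_pow_self (n : ℕ) :
    Complex.exp (2 * Real.pi * Complex.I / n) ^ n = 1 := by
  rcases eq_or_ne n 0 with rfl | hn
  · exact pow_zero _
  · exact (Complex.isPrimitiveRoot_exp n hn).pow_eq_one

theorem Complex.norm_exp_two_pi_mul_I_div (n : ℕ) :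
    ‖Complex.exp (2 * Real.pi * Complex.I / n)‖ = 1 := by
  rw [Complex.norm_exp]
  simp

theorem stmt8_general (V : Type) [AddCommGroup V] [Module ℂ V] [FiniteDimensional ℂ V]
    (w : Module.End ℂ V)
    (hreal : ∀ i : ℕ, ((LinearMap.charpoly w).coeff i).im = 0)
    (h : ℕ) (d : ℤ) :
    Tendsto
      (fun q : ℂ => LinearMap.det (1 - q ^ (h + 1) • w) / LinearMap.det (1 - q • w))
      (nhdsWithin (Complex.exp (2 * Real.pi * Complex.I / h) ^ d)
        {Complex.exp (2 * Real.pi * Complex.I / h) ^ d}ᶜ)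
      (nhds ((h + 1 : ℂ) ^
        (LinearMap.charpoly w).rootMultiplicity
          (Complex.exp (2 * Real.pi * Complex.I / h) ^ d))) := by
  set ω := Complex.exp (2 * Real.pi * Complex.I / h)
  have hl0 : ω ^ d ≠ 0 := zpow_ne_zero d (Complex.exp_ne_zero _)
  have hl : (ω ^ d) ^ h = 1 := by
    rw [← zpow_natCast, ← zpow_mul, mul_comm, zpow_mul, zpow_natCast,
      Complex.exp_two_pi_mul_I_div_pow_self, one_zpow]
  have hnorm : ‖ω ^ d‖ = 1 := by rw [norm_zpow, Complex.norm_exp_two_pi_mul_I_div, one_zpow]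
  have hlim := LinearMap.tendsto_det_one_sub_pow_succ_smul_div_det_one_sub_smul w hl0 hl
  rwa [Complex.inv_eq_conj hnorm, rootMultiplicity_conj hreal] at hlim

/-- Proposition: let `w` be an invertible endomorphism of a finite-dimensional complex
vector space whose characteristic polynomial has real coefficients, let `h ≥ 1`,
`ω = exp(2πi/h)`, and `d ∈ ℤ`.  Then `q ↦ det(1 - q^{h+1} w)/det(1 - q w)` has a
removable singularity at `q = ω^d`: its limit as `q → ω^d` (through `q ≠ ω^d`) is
`(h+1)^m`, where `m` is the algebraic multiplicity of `ω^d` as an eigenvalue of `w`. -/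
theorem stmt8 (V : Type) [AddCommGroup V] [Module ℂ V] [FiniteDimensional ℂ V]
    (w : Module.End ℂ V) (hw : IsUnit w)
    (hreal : ∀ i : ℕ, ((LinearMap.charpoly w).coeff i).im = 0)
    (h : ℕ) (hh : 1 ≤ h) (d : ℤ) :
    Tendsto
      (fun q : ℂ => LinearMap.det (1 - q ^ (h + 1) • w) / LinearMap.det (1 - q • w))
      (nhdsWithin (Complex.exp (2 * Real.pi * Complex.I / h) ^ d)
        {Complex.exp (2 * Real.pi * Complex.I / h) ^ d}ᶜ)
      (nhds ((h + 1 : ℂ) ^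
        (LinearMap.charpoly w).rootMultiplicity
          (Complex.exp (2 * Real.pi * Complex.I / h) ^ d))) :=
  stmt8_general V w hreal h d
end

section
/- Let n >= 1, let u be a permutation in the symmetric group S_n acting on C^n by permuting coordinates (via its permutation matrix), and let zeta be a complex root of unity of multiplicative order d with d >= 2. Then the algebraic multiplicity of zeta as an eigenvalue of the permutation matrix of u equals the number of cycles of u whose length is divisible by d. -/
/-!
Splitting `α` into a permutation-invariant subset and its complement makes the operator block
diagonal, so characteristic polynomials multiply. On a single `m`-cycle the operator satisfies
`f ^ m = 1`, and the vectors `e_a, f e_a, …, f^(m-1) e_a` are distinct basis vectors, so its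
minimal and characteristic polynomials are both `X ^ m - 1`. Hence the characteristic polynomial
of `σ` is `(X - 1) ^ #fix(σ) * ∏ (X ^ ℓ - 1)` over the cycle lengths `ℓ`. A primitive `d`-th root
of unity `ζ ≠ 1` is not a root of `X - 1`, and it is a simple root of the separable polynomial
`X ^ ℓ - 1` exactly when `d ∣ ℓ`.
-/

open Polynomial Equiv

namespace Equiv.Perm

variable {α : Type*} {p : α → Prop} [DecidablePred p]

theorem subtypeCongr_subtypePerm_one (σ : Perm α) (hp : ∀ x, p (σ x) ↔ p x)
    (hfix : ∀ x, ¬p x → σ x = x) : (σ.subtypePerm hp).subtypeCongr 1 = σ := by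
  ext x
  by_cases hx : p x
  · simp [subtypeCongr.left_apply _ _ hx]
  · simp [subtypeCongr.right_apply _ _ hx, hfix x hx]

theorem one_subtypeCongr_subtypePerm (σ : Perm α) (hp : ∀ x, ¬p (σ x) ↔ ¬p x)
    (hfix : ∀ x, p x → σ x = x) : subtypeCongr 1 (σ.subtypePerm hp) = σ := by
  ext x
  by_cases hx : p x
  · simp [subtypeCongr.left_apply _ _ hx, hfix x hx]
  · simp [subtypeCongr.right_apply _ _ hx]

end Equiv.Perm

noncomputable def permEnd (K α : Type*) [CommRing K] : Perm α →* Module.End K (α → K) where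
  toFun σ := LinearMap.funLeft K K ⇑σ⁻¹
  map_one' := rfl
  map_mul' _ _ := rfl

section CommRing

variable {K : Type*} [CommRing K]

theorem permEnd_single {α : Type*} [DecidableEq α] (σ : Perm α) (a : α) :
    permEnd K α σ (Pi.single a 1) = Pi.single (σ a) 1 := by
  ext x
  simp [permEnd, Pi.single_apply, Equiv.symm_apply_eq]

theorem charpoly_permEnd_one [Nontrivial K] (α : Type*) [Fintype α] :
    (permEnd K α 1).charpoly = (X - 1) ^ Fintype.card α := by
  rw [map_one, LinearMap.charpoly_one, Module.finrank_fintype_fun_eq_card]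

theorem charpoly_permEnd_sumCongr {α β : Type*} [Fintype α] [Fintype β] (σ : Perm α)
    (τ : Perm β) :
    (permEnd K (α ⊕ β) (σ.sumCongr τ)).charpoly =
      (permEnd K α σ).charpoly * (permEnd K β τ).charpoly := by
  rw [← LinearEquiv.charpoly_conj (LinearEquiv.sumArrowLequivProdArrow α β K K),
    ← LinearMap.charpoly_prodMap]
  rfl

theorem charpoly_permEnd_permCongr {α β : Type*} [Fintype α] [Fintype β] (e : α ≃ β)
    (σ : Perm α) : (permEnd K β (e.permCongr σ)).charpoly = (permEnd K α σ).charpoly := by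
  rw [← LinearEquiv.charpoly_conj (LinearEquiv.funCongrLeft K K e.symm)]
  rfl

theorem charpoly_permEnd_subtypeCongr {α : Type*} [Fintype α] {p : α → Prop} [DecidablePred p]
    (σ : Perm {a // p a}) (τ : Perm {a // ¬p a}) :
    (permEnd K α (σ.subtypeCongr τ)).charpoly =
      (permEnd K _ σ).charpoly * (permEnd K _ τ).charpoly := by
  rw [Perm.subtypeCongr, charpoly_permEnd_permCongr, charpoly_permEnd_sumCongr]

theorem charpoly_permEnd_mul_of_disjoint [Nontrivial K] {α : Type*} [Fintype α] [DecidableEq α]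
    {σ τ : Perm α} (h : σ.Disjoint τ) :
    (permEnd K α (σ * τ)).charpoly * (X - 1) ^ Fintype.card α =
      (permEnd K α σ).charpoly * (permEnd K α τ).charpoly := by
  let p : α → Prop := (· ∈ σ.support)
  have hσp (x : α) : p (σ x) ↔ p x := Perm.apply_mem_support
  have hτp (x : α) : ¬p (τ x) ↔ ¬p x :=
    not_congr (Perm.mem_support_iff_of_commute h.symm.commute x)
  set a := σ.subtypePerm hσp
  set b := τ.subtypePerm (p := fun x => ¬p x) hτp
  have hσ : a.subtypeCongr 1 = σ :=
    σ.subtypeCongr_subtypePerm_one hσp fun _ => Perm.notMem_support.mp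
  have hτ : Perm.subtypeCongr 1 b = τ :=
    τ.one_subtypeCongr_subtypePerm hτp fun _ hx => Perm.notMem_support.mp (h.mem_imp hx)
  have hστ : a.subtypeCongr b = σ * τ := by
    simpa [hσ, hτ] using (Perm.subtypeCongrHom p).map_mul (a, 1) (1, b)
  have hcpσ : (permEnd K α σ).charpoly =
      (permEnd K _ a).charpoly * (X - 1) ^ Fintype.card {x // ¬p x} := by
    rw [← charpoly_permEnd_one, ← charpoly_permEnd_subtypeCongr, hσ]
  have hcpτ : (permEnd K α τ).charpoly =
      (X - 1) ^ Fintype.card {x // p x} * (permEnd K _ b).charpoly := by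
    rw [← charpoly_permEnd_one, ← charpoly_permEnd_subtypeCongr, hτ]
  have hcard : Fintype.card α = Fintype.card {x // ¬p x} + Fintype.card {x // p x} := by
    rw [Fintype.card_subtype_compl, Nat.sub_add_cancel (Fintype.card_subtype_le p)]
  rw [← hστ, charpoly_permEnd_subtypeCongr, hcpσ, hcpτ, hcard, pow_add]
  ring

end CommRing

theorem le_natDegree_minpoly_of_linearIndependent {K M : Type*} [Field K] [AddCommGroup M]
    [Module K M] [FiniteDimensional K M] (f : Module.End K M) (v : M) {m : ℕ}
    (hv : LinearIndependent K fun k : Fin m => (f ^ (k : ℕ)) v) :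
    m ≤ (minpoly K f).natDegree := by
  by_contra! hdeg
  have hsum : ∑ k : Fin m, (minpoly K f).coeff k • (f ^ (k : ℕ)) v = 0 := by
    have h := LinearMap.congr_fun (aeval_eq_sum_range' hdeg f) v
    simp only [minpoly.aeval, LinearMap.zero_apply, LinearMap.sum_apply,
      LinearMap.smul_apply] at h
    rw [Fin.sum_univ_eq_sum_range (fun k => (minpoly K f).coeff k • (f ^ k) v), h]
  apply minpoly.ne_zero_of_finite K f
  ext k
  rw [coeff_zero]
  rcases lt_or_ge k m with hk | hk
  · exact Fintype.linearIndependent_iff.mp hv _ hsum ⟨k, hk⟩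
  · exact coeff_eq_zero_of_natDegree_lt (hdeg.trans_le hk)

section Field

variable {K : Type*} [Field K]

theorem charpoly_permEnd_of_isCycleOn {β : Type*} [Fintype β] [DecidableEq β] [Nonempty β]
    {σ : Perm β} (hσ : σ.IsCycleOn Set.univ) :
    (permEnd K β σ).charpoly = X ^ Fintype.card β - 1 := by
  set f := permEnd K β σ
  set m := Fintype.card β
  have hσ' : σ.IsCycleOn ((Finset.univ : Finset β) : Set β) := by rwa [Finset.coe_univ]
  obtain ⟨a⟩ := ‹Nonempty β›
  have hpow : f ^ m = 1 := by
    rw [← map_pow, ← map_one (permEnd K β)]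
    congr 1
    ext b
    exact hσ'.pow_card_apply (Finset.mem_univ b)
  have hindep : LinearIndependent K fun k : Fin m => (f ^ (k : ℕ)) (Pi.single a 1) := by
    have hbasis (k : ℕ) : (f ^ k) (Pi.single a 1) = Pi.basisFun K β ((σ ^ k) a) := by
      rw [← map_pow, permEnd_single, Pi.basisFun_apply]
    simp only [hbasis]
    refine (Pi.basisFun K β).linearIndependent.comp (fun k : Fin m => (σ ^ (k : ℕ)) a)
      fun i j h => Fin.ext ?_
    exact ((hσ'.pow_apply_eq_pow_apply (Finset.mem_univ a)).mp h).eq_of_lt_of_lt i.2 j.2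
  have hdeg := le_natDegree_minpoly_of_linearIndependent f _ hindep
  have hmonic : (minpoly K f).Monic := minpoly.monic (Algebra.IsIntegral.isIntegral f)
  have hmin : X ^ m - 1 = minpoly K f :=
    eq_of_monic_of_dvd_of_natDegree_le hmonic (monic_X_pow_sub_C 1 Fintype.card_ne_zero)
      (minpoly.dvd K f (by rw [map_sub, map_pow, aeval_X, hpow, map_one, sub_self]))
      (by rwa [← C_1, natDegree_X_pow_sub_C])
  rw [hmin]
  exact eq_of_monic_of_dvd_of_natDegree_le hmonic f.charpoly_monic f.minpoly_dvd_charpoly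
    (by rwa [f.charpoly_natDegree, Module.finrank_fintype_fun_eq_card])

variable {α : Type*} [Fintype α] [DecidableEq α]

theorem charpoly_permEnd_of_isCycle {σ : Perm α} (hσ : σ.IsCycle) :
    (permEnd K α σ).charpoly =
      (X ^ σ.support.card - 1) * (X - 1) ^ (Fintype.card α - σ.support.card) := by
  let p : α → Prop := (· ∈ σ.support)
  have hσp (x : α) : p (σ x) ↔ p x := Perm.apply_mem_support
  have hcycle : (σ.subtypePerm hσp).IsCycleOn Set.univ := by
    have := hσ.isCycleOn
    rw [← Perm.coe_support_eq_set_support] at this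
    exact this.subtypePerm
  have : Nonempty {x // p x} := hσ.nonempty_support.to_subtype
  conv_lhs => rw [← σ.subtypeCongr_subtypePerm_one hσp fun _ => Perm.notMem_support.mp]
  rw [charpoly_permEnd_subtypeCongr, charpoly_permEnd_of_isCycleOn hcycle, charpoly_permEnd_one,
    Fintype.card_subtype_compl, Fintype.card_coe]

theorem charpoly_permEnd (σ : Perm α) :
    (permEnd K α σ).charpoly =
      (X - 1) ^ (Fintype.card α - σ.support.card) * (σ.cycleType.map (X ^ · - 1)).prod := by
  have hX : (X - 1 : K[X]) ≠ 0 := X_sub_C_ne_zero 1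
  -- Multiplying by `(X - 1) ^ #σ.support` removes the truncated subtraction, so that the
  -- inductive step is the multiplicativity of `charpoly_permEnd_mul_of_disjoint`.
  suffices h : (permEnd K α σ).charpoly * (X - 1) ^ σ.support.card =
      (X - 1) ^ Fintype.card α * (σ.cycleType.map (X ^ · - 1)).prod by
    apply mul_right_cancel₀ (pow_ne_zero σ.support.card hX)
    rw [h, mul_right_comm, ← pow_add, Nat.sub_add_cancel (Finset.card_le_univ _)]
  induction σ using Perm.cycle_induction_on with
  | base_one => rw [charpoly_permEnd_one]; simp
  | base_cycles σ hσ =>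
    rw [charpoly_permEnd_of_isCycle hσ, hσ.cycleType, mul_assoc, ← pow_add,
      Nat.sub_add_cancel (Finset.card_le_univ _), Multiset.map_singleton, Multiset.prod_singleton,
      mul_comm]
  | induction_disjoint σ τ hd _ ihσ ihτ =>
    rw [hd.cycleType_mul, Multiset.map_add, Multiset.prod_add, hd.card_support_mul, pow_add]
    apply mul_left_cancel₀ (pow_ne_zero (Fintype.card α) hX)
    calc _ = (permEnd K α (σ * τ)).charpoly * (X - 1) ^ Fintype.card α *
          ((X - 1) ^ σ.support.card * (X - 1) ^ τ.support.card) := by ring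
      _ = (permEnd K α σ).charpoly * (X - 1) ^ σ.support.card *
          ((permEnd K α τ).charpoly * (X - 1) ^ τ.support.card) := by
        rw [charpoly_permEnd_mul_of_disjoint hd]; ring
      _ = _ := by rw [ihσ, ihτ]; ring

theorem separable_X_pow_sub_one {ℓ : ℕ} (hℓ : (ℓ : K) ≠ 0) : (X ^ ℓ - 1 : K[X]).Separable := by
  simpa using separable_X_pow_sub_C (1 : K) hℓ one_ne_zero

theorem rootMultiplicity_X_pow_sub_one {ζ : K} {d ℓ : ℕ} (hζ : IsPrimitiveRoot ζ d)
    (hℓ : (ℓ : K) ≠ 0) :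
    rootMultiplicity ζ (X ^ ℓ - 1 : K[X]) = if d ∣ ℓ then 1 else 0 := by
  have hroot : IsRoot (X ^ ℓ - 1 : K[X]) ζ ↔ d ∣ ℓ := by
    simp [sub_eq_zero, hζ.pow_eq_one_iff_dvd]
  split_ifs with h
  · have hsep := separable_X_pow_sub_one hℓ
    exact le_antisymm (rootMultiplicity_le_one_of_separable hsep ζ)
      (rootMultiplicity_pos hsep.ne_zero |>.mpr (hroot.mpr h))
  · exact rootMultiplicity_eq_zero (hroot.not.mpr h)

theorem rootMultiplicity_prod_X_pow_sub_one {ζ : K} {d : ℕ} (hζ : IsPrimitiveRoot ζ d)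
    (s : Multiset ℕ) (hs : ∀ ℓ ∈ s, (ℓ : K) ≠ 0) :
    rootMultiplicity ζ (s.map (X ^ · - 1 : ℕ → K[X])).prod =
      Multiset.card (s.filter (d ∣ ·)) := by
  induction s using Multiset.induction_on with
  | empty => simp
  | cons ℓ s ih =>
    have hℓ : (ℓ : K) ≠ 0 := hs ℓ (Multiset.mem_cons_self ℓ s)
    have hne : ((ℓ ::ₘ s).map (X ^ · - 1 : ℕ → K[X])).prod ≠ 0 :=
      Multiset.prod_ne_zero fun h0 => by
        obtain ⟨m, hm, hm0⟩ := Multiset.mem_map.mp h0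
        exact (separable_X_pow_sub_one (hs m hm)).ne_zero hm0
    rw [Multiset.map_cons, Multiset.prod_cons] at hne ⊢
    rw [rootMultiplicity_mul hne, rootMultiplicity_X_pow_sub_one hζ hℓ,
      ih fun ℓ hℓ => hs ℓ (Multiset.mem_cons_of_mem hℓ), Multiset.filter_cons]
    split_ifs <;> simp [add_comm]

theorem rootMultiplicity_charpoly_permEnd [CharZero K] (σ : Perm α) {ζ : K} {d : ℕ}
    (hζ : IsPrimitiveRoot ζ d) (hd : 1 < d) :
    (permEnd K α σ).charpoly.rootMultiplicity ζ = Multiset.card (σ.cycleType.filter (d ∣ ·)) := by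
  have hne := (permEnd K α σ).charpoly_monic.ne_zero
  rw [charpoly_permEnd] at hne ⊢
  rw [rootMultiplicity_mul hne, rootMultiplicity_prod_X_pow_sub_one hζ, rootMultiplicity_eq_zero,
    zero_add]
  · simp [sub_eq_zero, hζ.ne_one hd]
  · exact fun ℓ hℓ => Nat.cast_ne_zero.mpr (Nat.ne_zero_of_lt (Perm.two_le_of_mem_cycleType hℓ))

end Field

theorem stmt9_general (n : ℕ) (u : Equiv.Perm (Fin n)) (d : ℕ) (hd : 2 ≤ d)
    (ζ : ℂ) (hζ1 : ζ ^ d = 1) (hζ2 : ∀ m : ℕ, 0 < m → m < d → ζ ^ m ≠ 1) :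
    (LinearMap.charpoly
        (LinearMap.funLeft ℂ ℂ ⇑u⁻¹ : (Fin n → ℂ) →ₗ[ℂ] (Fin n → ℂ))).rootMultiplicity ζ =
      Multiset.card (u.cycleType.filter fun m => d ∣ m) :=
  rootMultiplicity_charpoly_permEnd u (IsPrimitiveRoot.mk_of_lt ζ (by omega) hζ1 hζ2) hd

/-- Lemma: let `u ∈ S_n` act on `ℂⁿ` by its permutation matrix (the linear map
`v ↦ v ∘ u⁻¹`, which sends the standard basis vector `e_j` to `e_{u(j)}`), and let `ζ` be
a complex root of unity of multiplicative order `d ≥ 2`.  Then the algebraic multiplicity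
of `ζ` as an eigenvalue of this linear map (its multiplicity as a root of the
characteristic polynomial) equals the number of cycles of `u` whose length is divisible
by `d` (since `d ≥ 2`, fixed points, which are omitted from `Equiv.Perm.cycleType`, never
qualify). -/
theorem stmt9 (n : ℕ) (hn : 1 ≤ n) (u : Equiv.Perm (Fin n)) (d : ℕ) (hd : 2 ≤ d)
    (ζ : ℂ) (hζ1 : ζ ^ d = 1) (hζ2 : ∀ m : ℕ, 0 < m → m < d → ζ ^ m ≠ 1) :
    (LinearMap.charpoly
        (LinearMap.funLeft ℂ ℂ ⇑u⁻¹ : (Fin n → ℂ) →ₗ[ℂ] (Fin n → ℂ))).rootMultiplicity ζ =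
      Multiset.card (u.cycleType.filter fun m => d ∣ m) :=
  stmt9_general n u d hd ζ hζ1 hζ2
end
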